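/- arXiv:2501.00322 — 4 statements merged into one kernel-verified Lean document; each statement's English description precedes it below -/
import Mathlib

section
/- Let M and N be bipath persistence modules. Then M ≅ N if and only if R(M) ≅ R(N), where R is the restriction functor along the covering map ζ : ZZ → B. Equivalently, the barcode of R(M) is a complete isomorphism invariant of the bipath module M. -/
open CategoryTheory CategoryTheory.Limits

def ZZ : Type := {p : ℤᵒᵈ × ℤ // OrderDual.ofDual p.1 = p.2 ∨ OrderDual.ofDual p.1 = p.2 + 1}

noncomputable instance : PartialOrder ZZ := Subtype.partialOrder _

def ZZ.a (p : ZZ) : ℤ := OrderDual.ofDual p.1.1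
def ZZ.b (p : ZZ) : ℤ := p.1.2

def Bipath (n m : ℕ) : Type := {z : ℕ // z < n + m}

def bipathLE (n : ℕ) (x y : ℕ) : Prop :=
  x = y ∨ (0 < n ∧ ((x ≤ y ∧ y ≤ n) ∨ (n ≤ y ∧ y ≤ x) ∨ x = 0 ∨ y = n))

lemma bipathLE_refl (n x : ℕ) : bipathLE n x x := by unfold bipathLE; omega

lemma bipathLE_trans {n x y z : ℕ} (h1 : bipathLE n x y) (h2 : bipathLE n y z) :
    bipathLE n x z := by unfold bipathLE at *; omega

lemma bipathLE_antisymm {n x y : ℕ} (h1 : bipathLE n x y) (h2 : bipathLE n y x) :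
    x = y := by unfold bipathLE at *; omega

instance (n m : ℕ) : PartialOrder (Bipath n m) where
  le x y := bipathLE n x.1 y.1
  le_refl x := bipathLE_refl n x.1
  le_trans _ _ _ h1 h2 := bipathLE_trans h1 h2
  le_antisymm _ _ h1 h2 := Subtype.ext (bipathLE_antisymm h1 h2)

def zetaFun (n m : ℕ) (a b : ℤ) : ℕ :=
  if b % ((n : ℤ) + m - 1) = 0 then (if a = b then n + m - 1 else 0)
  else if a = b then (b % ((n : ℤ) + m - 1)).toNat
  else if b % ((n : ℤ) + m - 1) ≤ (n : ℤ) - 1 then (b % ((n : ℤ) + m - 1)).toNat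
  else (b % ((n : ℤ) + m - 1)).toNat + 1

lemma zetaFun_lt (n m : ℕ) (hn : 1 < n) (hm : 1 < m) (a b : ℤ) :
    zetaFun n m a b < n + m := by
  unfold zetaFun
  have hN : (0:ℤ) < (n : ℤ) + m - 1 := by omega
  have h1 := Int.emod_nonneg b (by omega : ((n:ℤ) + m - 1) ≠ 0)
  have h2 := Int.emod_lt_of_pos b hN
  split_ifs <;> omega

def zeta (n m : ℕ) (hn : 1 < n) (hm : 1 < m) (p : ZZ) : Bipath n m :=
  ⟨zetaFun n m p.a p.b, zetaFun_lt n m hn hm _ _⟩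
open CategoryTheory CategoryTheory.Limits
open scoped Classical

section IntervalModule
variable (k : Type) [Field k] {P : Type} [Preorder P]

/-- Convexity of a subset of a poset. -/
def IsConvexIn (I : Set P) : Prop :=
  ∀ ⦃p z q : P⦄, p ∈ I → q ∈ I → p ≤ z → z ≤ q → z ∈ I

/-- Connectedness of a subset of a poset: any two points are joined by a
zigzag of comparabilities inside the subset. -/
def IsConnectedIn (I : Set P) : Prop :=
  ∀ x ∈ I, ∀ y ∈ I,
    Relation.ReflTransGen (fun a b => a ∈ I ∧ b ∈ I ∧ (a ≤ b ∨ b ≤ a)) x y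

/-- An interval of a poset: a nonempty convex connected subset. -/
structure IsIntervalIn (I : Set P) : Prop where
  nonempty : I.Nonempty
  convex : IsConvexIn I
  connected : IsConnectedIn I

/-- The fiber of the interval module at a point: `k` if `p ∈ I`, `0` otherwise. -/
def intervalFiber (I : Set P) (p : P) : Submodule k k where
  carrier := {x : k | p ∉ I → x = 0}
  add_mem' := by intro a b ha hb h; rw [ha h, hb h, add_zero]
  zero_mem' := fun _ => rfl
  smul_mem' := by intro c x hx h; rw [smul_eq_mul, hx h, mul_zero]

/-- Internal maps of the interval module. -/
noncomputable def intervalMap (I : Set P) (p q : P) :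
    intervalFiber k I p →ₗ[k] intervalFiber k I q where
  toFun x := ⟨if q ∈ I then x.1 else 0, fun hq => if_neg hq⟩
  map_add' x y := by apply Subtype.ext; by_cases hq : q ∈ I <;> simp [hq]
  map_smul' c x := by apply Subtype.ext; by_cases hq : q ∈ I <;> simp [hq]

/-- The interval module `kI` supported on a convex subset `I`:
it is `k` on `I` with identity internal maps, and `0` elsewhere. -/
noncomputable def intervalModule (I : Set P) (hI : IsConvexIn I) : P ⥤ ModuleCat k where
  obj p := ModuleCat.of k (intervalFiber k I p)
  map {p q} _ := ModuleCat.ofHom (intervalMap k I p q)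
  map_id p := by
    ext x
    show (if p ∈ I then x.1 else 0) = x.1
    by_cases hp : p ∈ I
    · simp [hp]
    · simp [hp, x.2 hp]
  map_comp {p q r} f g := by
    ext x
    show (if r ∈ I then x.1 else 0) = (if r ∈ I then (if q ∈ I then x.1 else 0) else 0)
    by_cases hr : r ∈ I
    · by_cases hq : q ∈ I
      · simp [hr, hq]
      · have hp : p ∉ I := fun hp => hq (hI hp hr f.le g.le)
        simp [hr, hq, x.2 hp]
    · simp [hr]

end IntervalModule

/-- The restriction functor along a monotone map, by precomposition. -/
noncomputable def restrictAlong (k : Type) [Field k] {P Q : Type} [Preorder P] [Preorder Q]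
    {f : P → Q} (hf : Monotone f) : (Q ⥤ ModuleCat k) ⥤ (P ⥤ ModuleCat k) :=
  (Functor.whiskeringLeft _ _ _).obj hf.functor


lemma ZZ.le_iff {p q : ZZ} : p ≤ q ↔ q.a ≤ p.a ∧ p.b ≤ q.b := Iff.rfl

/-- Translation of a zigzag point by `z * N` in both coordinates. -/
def ZZ.translate (N z : ℤ) (p : ZZ) : ZZ :=
  ⟨(OrderDual.toDual (p.a + z * N), p.b + z * N), by
    rcases p.2 with h | h
    · left; show p.a + z * N = p.b + z * N; unfold ZZ.a ZZ.b at *; omega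
    · right; show p.a + z * N = p.b + z * N + 1; unfold ZZ.a ZZ.b at *; omega⟩

/-- The interval `[a,b]_ZZ = {(c,d) ∈ ZZ : c ≤ b, d ≥ a}`. -/
def zzIcc (a b : ℤ) : Set ZZ := {p | p.a ≤ b ∧ a ≤ p.b}
/-- The interval `[a,b)_ZZ = {(c,d) ∈ ZZ : a ≤ d < b}`. -/
def zzIco (a b : ℤ) : Set ZZ := {p | a ≤ p.b ∧ p.b < b}
/-- The interval `(a,b]_ZZ = {(c,d) ∈ ZZ : a < c ≤ b}`. -/
def zzIoc (a b : ℤ) : Set ZZ := {p | a < p.a ∧ p.a ≤ b}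
/-- The interval `(a,b)_ZZ = {(c,d) ∈ ZZ : c > a, d < b}`. -/
def zzIoo (a b : ℤ) : Set ZZ := {p | a < p.a ∧ p.b < b}

lemma zzIcc_convex (a b : ℤ) : IsConvexIn (zzIcc a b) := by
  intro p z q hp hq hpz hzq
  exact ⟨le_trans (ZZ.le_iff.1 hpz).1 hp.1, le_trans hp.2 (ZZ.le_iff.1 hpz).2⟩

lemma zzIco_convex (a b : ℤ) : IsConvexIn (zzIco a b) := by
  intro p z q hp hq hpz hzq
  exact ⟨le_trans hp.1 (ZZ.le_iff.1 hpz).2, lt_of_le_of_lt (ZZ.le_iff.1 hzq).2 hq.2⟩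

lemma zzIoc_convex (a b : ℤ) : IsConvexIn (zzIoc a b) := by
  intro p z q hp hq hpz hzq
  exact ⟨lt_of_lt_of_le hq.1 (ZZ.le_iff.1 hzq).1, le_trans (ZZ.le_iff.1 hpz).1 hp.2⟩

lemma zzIoo_convex (a b : ℤ) : IsConvexIn (zzIoo a b) := by
  intro p z q hp hq hpz hzq
  exact ⟨lt_of_lt_of_le hq.1 (ZZ.le_iff.1 hzq).1, lt_of_le_of_lt (ZZ.le_iff.1 hzq).2 hq.2⟩

section ConvexLemmas
variable {P : Type} [Preorder P]

lemma isConvex_univ : IsConvexIn (Set.univ : Set P) := fun _ _ _ _ _ _ _ => trivial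

lemma isConvex_lower2 (a b : P) : IsConvexIn {z : P | z ≤ a ∨ z ≤ b} := by
  intro p z q hp hq hpz hzq
  rcases hq with h | h
  · exact Or.inl (le_trans hzq h)
  · exact Or.inr (le_trans hzq h)

lemma isConvex_upper2 (a b : P) : IsConvexIn {z : P | a ≤ z ∨ b ≤ z} := by
  intro p z q hp hq hpz hzq
  rcases hp with h | h
  · exact Or.inl (le_trans h hpz)
  · exact Or.inr (le_trans h hpz)

lemma isConvex_Icc (a b : P) : IsConvexIn {z : P | a ≤ z ∧ z ≤ b} :=
  fun _ _ _ hp hq hpz hzq => ⟨le_trans hp.1 hpz, le_trans hzq hq.2⟩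

end ConvexLemmas




section LinAlg
variable {k : Type} [Field k]
variable {V W : Type*} [AddCommGroup V] [Module k V] [AddCommGroup W] [Module k W]

/-- A complement of `C` containing `A`, provided `A ⊓ C = ⊥`. -/
lemma exists_isCompl_ge (A C : Submodule k W) (hdisj : A ⊓ C = ⊥) :
    ∃ D : Submodule k W, IsCompl C D ∧ A ≤ D := by
  obtain ⟨E, hE⟩ := Submodule.exists_isCompl (A ⊔ C)
  refine ⟨A ⊔ E, ⟨?_, ?_⟩, le_sup_left⟩
  · rw [disjoint_iff, eq_bot_iff]
    intro x hx
    obtain ⟨hxC, hxAE⟩ := Submodule.mem_inf.mp hx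
    obtain ⟨α, hα, ε, hε, hsum⟩ := Submodule.mem_sup.mp hxAE
    have hε0 : ε = 0 := by
      have h1 : ε ∈ (A ⊔ C) ⊓ E := by
        refine Submodule.mem_inf.mpr ⟨?_, hε⟩
        have hx2 : ε = x - α := by rw [← hsum]; abel
        rw [hx2]
        exact Submodule.sub_mem _ (Submodule.mem_sup_right hxC) (Submodule.mem_sup_left hα)
      rw [hE.disjoint.eq_bot] at h1
      simpa using h1
    have hxA : x ∈ A := by rw [← hsum, hε0, add_zero]; exact hα
    have hfin : x ∈ A ⊓ C := Submodule.mem_inf.mpr ⟨hxA, hxC⟩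
    rw [hdisj] at hfin; simpa using hfin
  · rw [codisjoint_iff, ← sup_assoc, sup_comm C A]
    exact hE.codisjoint.eq_top

/-- Flag-adapted section. -/
lemma adapted_section (a : V →ₗ[k] W) (F : ℕ → Submodule k V) (hmono : Monotone F)
    (r : ℕ) :
    ∃ s : W →ₗ[k] V, (∀ w ∈ Submodule.map a (F r), a (s w) = w) ∧
      (∀ l ≤ r, Submodule.map s (Submodule.map a (F l)) ≤ F l) := by
  induction r with
  | zero =>
      set A := Submodule.map a (F 0) with hA
      obtain ⟨Q, hQ⟩ := Submodule.exists_isCompl A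
      set pr := A.linearProjOfIsCompl Q hQ with hpr
      have hsurj : Function.Surjective ((a.domRestrict (F 0)).codRestrict A
          (fun x => Submodule.mem_map_of_mem x.2)) := by
        rintro ⟨w, hw⟩
        obtain ⟨x, hx, hxw⟩ := hw
        exact ⟨⟨x, hx⟩, Subtype.ext hxw⟩
      obtain ⟨g, hg⟩ := LinearMap.exists_rightInverse_of_surjective _
        (LinearMap.range_eq_top.mpr hsurj)
      refine ⟨(F 0).subtype ∘ₗ g ∘ₗ pr, ?_, ?_⟩
      · intro w hw
        have h1 : pr w = ⟨w, hw⟩ := Submodule.linearProjOfIsCompl_apply_left hQ ⟨w, hw⟩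
        have h2 := congrArg Subtype.val (LinearMap.congr_fun hg (⟨w, hw⟩ : A))
        simp [h1]; exact h2
      · intro l hl
        have hl0 : l = 0 := Nat.le_zero.mp hl
        subst hl0
        rintro x ⟨y, hy, rfl⟩
        exact ((g (pr y)) : F 0).2
  | succ r ih =>
      obtain ⟨s, hsec, had⟩ := ih
      set A := Submodule.map a (F r) with hAdef
      set B := Submodule.map a (F (r+1)) with hBdef
      have hAB : A ≤ B := Submodule.map_mono (hmono (Nat.le_succ r))
      obtain ⟨Q, hQ⟩ := Submodule.exists_isCompl A
      set C := Q ⊓ B with hCdef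
      have hCB : C ≤ B := by rw [hCdef]; exact inf_le_right
      have hACB : A ⊔ C = B := by
        rw [hCdef, ← sup_inf_assoc_of_le _ hAB, hQ.codisjoint.eq_top, top_inf_eq]
      have hdisjAC : A ⊓ C = ⊥ := by
        rw [hCdef, ← inf_assoc, hQ.disjoint.eq_bot, bot_inf_eq]
      obtain ⟨D, hCD, hAD⟩ := exists_isCompl_ge A C hdisjAC
      set pr := C.linearProjOfIsCompl D hCD with hprdef
      have hsurj : Function.Surjective ((a.domRestrict (F (r+1))).codRestrict B
          (fun x => Submodule.mem_map_of_mem x.2)) := by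
        rintro ⟨w, hw⟩
        obtain ⟨x, hx, hxw⟩ := hw
        exact ⟨⟨x, hx⟩, Subtype.ext hxw⟩
      obtain ⟨g, hg⟩ := LinearMap.exists_rightInverse_of_surjective _
        (LinearMap.range_eq_top.mpr hsurj)
      set t : W →ₗ[k] V := (F (r+1)).subtype ∘ₗ g ∘ₗ (Submodule.inclusion hCB) ∘ₗ pr with htdef
      set s' : W →ₗ[k] V := s ∘ₗ (LinearMap.id - C.subtype ∘ₗ pr) + t with hs'def
      have hs'apply : ∀ w, s' w = s (w - (pr w : W)) + t w := by
        intro w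
        simp [hs'def, LinearMap.add_apply, LinearMap.comp_apply, LinearMap.sub_apply]
      have htval : ∀ w, a (t w) = (pr w : W) := by
        intro w
        have h2 := congrArg Subtype.val (LinearMap.congr_fun hg
          ((Submodule.inclusion hCB) (pr w)))
        simp [htdef]; exact h2
      have htmem : ∀ w, t w ∈ F (r+1) := fun w => ((g _ : F (r+1))).2
      have hkey : ∀ w ∈ B, w - (pr w : W) ∈ A := by
        intro w hw
        have hD : w - (pr w : W) ∈ D := by
          obtain ⟨c, hc, d, hd, hcd⟩ := Submodule.mem_sup.mp
            (show w ∈ C ⊔ D by rw [hCD.codisjoint.eq_top]; exact Submodule.mem_top)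
          have hprw : (pr w : W) = c := by
            have hadd : pr w = pr c + pr d := by rw [← map_add, hcd]
            rw [hadd]
            have h1 : pr c = ⟨c, hc⟩ := Submodule.linearProjOfIsCompl_apply_left hCD ⟨c, hc⟩
            have h2 : pr d = 0 := Submodule.linearProjOfIsCompl_apply_right hCD ⟨d, hd⟩
            simp [h1, h2]
          rw [hprw, ← hcd]; simpa using hd
        have hBmem : w - (pr w : W) ∈ B := Submodule.sub_mem _ hw (hCB (pr w).2)
        obtain ⟨α, hα, γ, hγ, hsum⟩ := Submodule.mem_sup.mp
          (show w - (pr w : W) ∈ A ⊔ C by rw [hACB]; exact hBmem)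
        have hγ0 : γ = 0 := by
          have hγD : γ ∈ D := by
            have hγval : γ = (w - (pr w : W)) - α := by rw [← hsum]; abel
            rw [hγval]; exact Submodule.sub_mem _ hD (hAD hα)
          have hfin : γ ∈ C ⊓ D := Submodule.mem_inf.mpr ⟨hγ, hγD⟩
          rw [hCD.disjoint.eq_bot] at hfin; simpa using hfin
        rw [← hsum, hγ0, add_zero]; exact hα
      refine ⟨s', ?_, ?_⟩
      · intro w hw
        have h1 : a (s (w - (pr w : W))) = w - (pr w : W) := hsec _ (hkey w hw)
        rw [hs'apply, map_add, h1, htval]; abel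
      · intro l hl w hw
        rcases Nat.lt_or_ge l (r+1) with hlt | hge
        · have hle : l ≤ r := Nat.lt_succ_iff.mp hlt
          obtain ⟨w1, hw1, rfl⟩ := hw
          obtain ⟨y, hy, rfl⟩ := hw1
          have hyA : (a y) ∈ A := Submodule.map_mono (hmono hle) (Submodule.mem_map_of_mem hy)
          have hpr0 : pr (a y) = 0 :=
            Submodule.linearProjOfIsCompl_apply_right hCD ⟨a y, hAD hyA⟩
          have hs'eq : s' (a y) = s (a y) := by
            rw [hs'apply, hpr0]
            have ht0 : t (a y) = 0 := by rw [htdef]; simp [hpr0]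
            simp [ht0]
          rw [hs'eq]
          exact had l hle (Submodule.mem_map_of_mem (Submodule.mem_map_of_mem hy))
        · have hleq : l = r + 1 := le_antisymm hl hge
          subst hleq
          obtain ⟨w1, hw1, rfl⟩ := hw
          obtain ⟨y, hy, rfl⟩ := hw1
          have hB : (a y) ∈ B := Submodule.mem_map_of_mem hy
          have h1 : s ((a y) - (pr (a y) : W)) ∈ F r :=
            had r le_rfl (Submodule.mem_map_of_mem (hkey _ hB))
          rw [hs'apply]
          exact Submodule.add_mem _ (hmono (Nat.le_succ r) h1) (htmem _)

end LinAlg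


section Infra
variable {n m : ℕ} (hn : 1 < n) (hm : 1 < m)

/-- canonical element of the bipath poset -/
def bp (j : ℕ) : Bipath n m := ⟨min j (n+m-1), by omega⟩

lemma bp_le {j j' : ℕ} (h : bipathLE n (min j (n+m-1)) (min j' (n+m-1))) :
    bp hn hm j ≤ bp hn hm j' := h

variable {k : Type} [Field k]
variable (M : Bipath n m ⥤ ModuleCat k)

def mor {j j' : ℕ} (h : bp hn hm j ≤ bp hn hm j') :
    M.obj (bp hn hm j) ⟶ M.obj (bp hn hm j') := M.map (homOfLE h)

lemma mor_comp {i j l : ℕ} (h1 : bp hn hm i ≤ bp hn hm j) (h2 : bp hn hm j ≤ bp hn hm l) :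
    mor hn hm M (h1.trans h2) = mor hn hm M h1 ≫ mor hn hm M h2 := by
  unfold mor
  rw [← M.map_comp, homOfLE_comp]

lemma mor_id {j : ℕ} (h : bp hn hm j ≤ bp hn hm j) :
    mor hn hm M h = 𝟙 _ := by
  unfold mor
  rw [show homOfLE h = 𝟙 (bp hn hm j) from Subsingleton.elim _ _, M.map_id]

lemma mor_apply_comp {i j l : ℕ} (h1 : bp hn hm i ≤ bp hn hm j) (h2 : bp hn hm j ≤ bp hn hm l)
    (x : M.obj (bp hn hm i)) :
    mor hn hm M (h1.trans h2) x = mor hn hm M h2 (mor hn hm M h1 x) := by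
  rw [mor_comp hn hm M h1 h2]; rfl

lemma low_le {i j : ℕ} (hij : i ≤ j) (hj : j ≤ n) : bp hn hm i ≤ bp hn hm j := by
  apply bp_le; unfold bipathLE; omega

/-- range of the chain composite as a submodule -/
def rng {i j : ℕ} (h : bp hn hm i ≤ bp hn hm j) : Submodule k (M.obj (bp hn hm j)) :=
  LinearMap.range (mor hn hm M h).hom

lemma rng_mono {i i' j : ℕ} (h1 : bp hn hm i ≤ bp hn hm i') (h2 : bp hn hm i' ≤ bp hn hm j) :
    rng hn hm M (h1.trans h2) ≤ rng hn hm M h2 := by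
  unfold rng
  rw [mor_comp hn hm M h1 h2]
  rintro x ⟨y, rfl⟩
  exact ⟨mor hn hm M h1 y, rfl⟩

end Infra

section Infra2
variable {n m : ℕ} (hn : 1 < n) (hm : 1 < m)
variable {k : Type} [Field k]
variable (M : Bipath n m ⥤ ModuleCat k)

lemma mor_apply_id {j : ℕ} (h : bp hn hm j ≤ bp hn hm j) (x : M.obj (bp hn hm j)) :
    mor hn hm M h x = x := by
  rw [mor_id]; rfl

lemma rng_comp {i j l : ℕ} (h1 : bp hn hm i ≤ bp hn hm j) (h2 : bp hn hm j ≤ bp hn hm l) :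
    rng hn hm M (h1.trans h2)
      = Submodule.map (mor hn hm M h2).hom
          (rng hn hm M h1) := by
  unfold rng
  rw [mor_comp hn hm M h1 h2, ModuleCat.hom_comp]
  exact LinearMap.range_comp _ _

lemma rng_self_top {j : ℕ} (h : bp hn hm j ≤ bp hn hm j) :
    rng hn hm M h = ⊤ := by
  unfold rng
  rw [LinearMap.range_eq_top]
  intro x
  exact ⟨x, mor_apply_id hn hm M h x⟩

end Infra2

section Chain
variable {n m : ℕ} (hn : 1 < n) (hm : 1 < m)
variable {k : Type} [Field k]
variable (M : Bipath n m ⥤ ModuleCat k)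

/-- The chain-fixing lemma: an automorphism `E` of `M_n` that preserves the images
of all chain composites and is the identity on the image of the full composite
extends "backwards" to a chain-natural family with identity at the bottom. -/
lemma chain_fix (hfd : ∀ p, FiniteDimensional k (M.obj p))
    (E : M.obj (bp hn hm n) ≃ₗ[k] M.obj (bp hn hm n))
    (hE1 : ∀ l (hl : l ≤ n),
      Submodule.map (E.toLinearMap) (rng hn hm M (low_le hn hm hl le_rfl))
        ≤ rng hn hm M (low_le hn hm hl le_rfl))
    (hE2 : ∀ x, E (mor hn hm M (low_le hn hm (Nat.zero_le n) le_rfl) x)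
        = mor hn hm M (low_le hn hm (Nat.zero_le n) le_rfl) x) :
    ∃ d : ∀ j, (M.obj (bp hn hm j) ≃ₗ[k] M.obj (bp hn hm j)),
      (∀ x, d 0 x = x) ∧ (∀ x, d n x = E x) ∧
      (∀ i (hi : i + 1 ≤ n) x,
        d (i+1) (mor hn hm M (low_le hn hm (Nat.le_succ i) hi) x)
          = mor hn hm M (low_le hn hm (Nat.le_succ i) hi) (d i x)) := by
  have aux : ∀ t j, j + t = n → ∃ d : ∀ i, (M.obj (bp hn hm i) ≃ₗ[k] M.obj (bp hn hm i)),
      (∀ x, d n x = E x) ∧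
      (∀ i (_ : j ≤ i) (hi : i + 1 ≤ n) x,
        d (i+1) (mor hn hm M (low_le hn hm (Nat.le_succ i) hi) x)
          = mor hn hm M (low_le hn hm (Nat.le_succ i) hi) (d i x)) ∧
      (∀ l (hl : l ≤ j) (hjn : j ≤ n),
        Submodule.map (d j).toLinearMap (rng hn hm M (low_le hn hm hl hjn))
          ≤ rng hn hm M (low_le hn hm hl hjn)) ∧
      (∀ (hjn : j ≤ n) x, d j (mor hn hm M (low_le hn hm (Nat.zero_le j) hjn) x)
          = mor hn hm M (low_le hn hm (Nat.zero_le j) hjn) x) := by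
    intro t
    induction t with
    | zero =>
        intro j hj
        have hjn : j = n := by omega
        subst hjn
        refine ⟨fun i => if h : i = j then h.symm ▸ E else LinearEquiv.refl k _, ?_, ?_, ?_, ?_⟩
        · intro x; simp
        · intro i hji hi x; omega
        · intro l hl hjn
          simpa using hE1 l hl
        · intro hjn x
          simpa using hE2 x
    | succ t ih =>
        intro j hjt
        obtain ⟨d, hdn, hnat, hinv1, hinv2⟩ := ih (j+1) (by omega)
        have hj1 : j + 1 ≤ n := by omega
        have hjn : j ≤ n := by omega
        set a : M.obj (bp hn hm j) →ₗ[k] M.obj (bp hn hm (j+1)) :=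
          (mor hn hm M (low_le hn hm (Nat.le_succ j) hj1)).hom with ha
        set F : ℕ → Submodule k (M.obj (bp hn hm j)) :=
          fun l => if h : l ≤ j then rng hn hm M (low_le hn hm h hjn) else ⊤ with hF
        have hFmono : Monotone F := by
          intro l l' hll'
          by_cases h' : l' ≤ j
          · have h : l ≤ j := le_trans hll' h'
            rw [hF]; simp only [dif_pos h, dif_pos h']
            exact rng_mono hn hm M (low_le hn hm hll' (le_trans h' hjn)) (low_le hn hm h' hjn)
          · rw [hF]; simp only [dif_neg h']
            exact le_top
        have hFj : F j = ⊤ := by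
          rw [hF]; simp only [dif_pos le_rfl]
          exact rng_self_top hn hm M _
        obtain ⟨s, hsec, had⟩ := adapted_section (k := k) a F hFmono j
        have hsec' : ∀ w, w ∈ LinearMap.range a → a (s w) = w := by
          intro w hw
          apply hsec
          rw [hFj, Submodule.map_top]
          exact hw
        set d' := d (j+1) with hd'
        -- d' preserves range a
        have hrng_a : rng hn hm M (low_le hn hm (Nat.le_succ j) hj1) = LinearMap.range a := rfl
        have hd'static : ∀ w ∈ LinearMap.range a, d' w ∈ LinearMap.range a := by
          intro w hw
          have := hinv1 j (Nat.le_succ j) hj1 (Submodule.mem_map_of_mem (hrng_a ▸ hw))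
          exact hrng_a ▸ this
        set Dlin : M.obj (bp hn hm j) →ₗ[k] M.obj (bp hn hm j) :=
          (LinearMap.id - s ∘ₗ a) + (s ∘ₗ (d'.toLinearMap ∘ₗ a)) with hD
        have hDapply : ∀ x, Dlin x = x - s (a x) + s (d' (a x)) := by
          intro x
          simp [hD, LinearMap.add_apply, LinearMap.sub_apply, LinearMap.comp_apply]
        have hDa : ∀ x, a (Dlin x) = d' (a x) := by
          intro x
          rw [hDapply, map_add, map_sub]
          rw [hsec' (a x) ⟨x, rfl⟩, hsec' (d' (a x)) (hd'static _ ⟨x, rfl⟩)]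
          abel
        have hinj : Function.Injective Dlin := by
          intro x y hxy
          have hsub : Dlin (x - y) = 0 := by rw [map_sub, hxy, sub_self]
          have h0 : a (x - y) = 0 := by
            have h1 : a (Dlin (x - y)) = d' (a (x - y)) := hDa _
            rw [hsub, map_zero] at h1
            have := d'.injective (by rw [← h1, map_zero] : d' (a (x-y)) = d' 0)
            exact this
          have : Dlin (x - y) = x - y := by
            rw [hDapply, h0, map_zero, map_zero, map_zero]
            abel
          rw [hsub] at this
          exact sub_eq_zero.mp this.symm
        have hsurj : Function.Surjective Dlin := by
          haveI := hfd (bp hn hm j)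
          exact (LinearMap.injective_iff_surjective).mp hinj
        set D : M.obj (bp hn hm j) ≃ₗ[k] M.obj (bp hn hm j) :=
          LinearEquiv.ofBijective Dlin ⟨hinj, hsurj⟩ with hDdef
        have hDval : ∀ x, D x = Dlin x := fun x => rfl
        set dnew : ∀ i, ((M.obj (bp hn hm i)) ≃ₗ[k] (M.obj (bp hn hm i))) :=
          fun i => if h : i = j then h.symm ▸ D else d i with hdnew
        have hdnewj : dnew j = D := by
          rw [hdnew]
          show (if h : j = j then h.symm ▸ D else d j) = D
          rw [dif_pos rfl]
        have hdnewne : ∀ i, i ≠ j → dnew i = d i := by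
          intro i hi
          rw [hdnew]
          show (if h : i = j then h.symm ▸ D else d i) = d i
          rw [dif_neg hi]
        refine ⟨dnew, ?_, ?_, ?_, ?_⟩
        · intro x
          rw [hdnewne n (by omega)]
          exact hdn x
        · intro i hji hi x
          by_cases h : i = j
          · subst h
            rw [hdnewne (i+1) (by omega), hdnewj]
            have h1 := hDa x
            rw [← hDval] at h1
            exact h1.symm
          · rw [hdnewne i h, hdnewne (i+1) (by omega)]
            exact hnat i (by omega) hi x
        · intro l hl hjn'
          rw [hdnewj]
          rintro x ⟨y, hy, rfl⟩
          have hyF : y ∈ F l := by rw [hF]; simpa [dif_pos hl] using hy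
          have hyA : a y ∈ Submodule.map a (F l) := Submodule.mem_map_of_mem hyF
          have h1 : s (a y) ∈ F l := had l hl (Submodule.mem_map_of_mem hyA)
          have hay : a y ∈ rng hn hm M (low_le hn hm (le_trans hl (Nat.le_succ j)) hj1) := by
            rw [show (low_le hn hm (le_trans hl (Nat.le_succ j)) hj1 :
                  bp hn hm l ≤ bp hn hm (j+1))
                = (low_le hn hm hl hjn).trans (low_le hn hm (Nat.le_succ j) hj1) from rfl,
              rng_comp hn hm M (low_le hn hm hl hjn) (low_le hn hm (Nat.le_succ j) hj1)]
            exact Submodule.mem_map_of_mem hy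
          have hd'ay : d' (a y) ∈ rng hn hm M (low_le hn hm (le_trans hl (Nat.le_succ j)) hj1) :=
            hinv1 l (by omega) hj1 (Submodule.mem_map_of_mem hay)
          have hd'ay' : d' (a y) ∈ Submodule.map a (F l) := by
            rw [show (low_le hn hm (le_trans hl (Nat.le_succ j)) hj1 :
                  bp hn hm l ≤ bp hn hm (j+1))
                = (low_le hn hm hl hjn).trans (low_le hn hm (Nat.le_succ j) hj1) from rfl,
              rng_comp hn hm M (low_le hn hm hl hjn) (low_le hn hm (Nat.le_succ j) hj1)] at hd'ay
            obtain ⟨z, hz, hzz⟩ := hd'ay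
            refine ⟨z, ?_, hzz⟩
            rw [hF]; simpa [dif_pos hl] using hz
          have h2 : s (d' (a y)) ∈ F l := had l hl (Submodule.mem_map_of_mem hd'ay')
          have hDy : (D.toLinearMap) y = y - s (a y) + s (d' (a y)) := hDapply y
          rw [hDy]
          have hyrng : y ∈ rng hn hm M (low_le hn hm hl hjn) := hy
          have h1' : s (a y) ∈ rng hn hm M (low_le hn hm hl hjn) := by
            rw [hF] at h1; simpa [dif_pos hl] using h1
          have h2' : s (d' (a y)) ∈ rng hn hm M (low_le hn hm hl hjn) := by
            rw [hF] at h2; simpa [dif_pos hl] using h2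
          exact Submodule.add_mem _ (Submodule.sub_mem _ hyrng h1') h2'
        · intro hjn' x
          rw [hdnewj]
          set y := mor hn hm M (low_le hn hm (Nat.zero_le j) hjn) x with hy
          have hay : a y = mor hn hm M (low_le hn hm (Nat.zero_le (j+1)) hj1) x := by
            rw [hy, ha]
            rw [show (low_le hn hm (Nat.zero_le (j+1)) hj1 : bp hn hm 0 ≤ bp hn hm (j+1))
                = (low_le hn hm (Nat.zero_le j) hjn).trans
                    (low_le hn hm (Nat.le_succ j) hj1) from rfl]
            exact (mor_apply_comp hn hm M _ _ x).symm
          have hd'ay : d' (a y) = a y := by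
            rw [hay]
            exact hinv2 hj1 x
          have hfin : D y = y - s (a y) + s (d' (a y)) := by rw [hDval, hDapply]
          rw [hfin, hd'ay]
          abel
  obtain ⟨d, hdn, hnat, _, hinv2⟩ := aux n 0 (by omega)
  refine ⟨d, ?_, hdn, fun i hi x => hnat i (Nat.zero_le i) hi x⟩
  intro x
  have h0 := hinv2 (Nat.zero_le n) x
  rw [mor_apply_id hn hm M _ x] at h0
  exact h0

end Chain

-- ZZ points and zeta computations
section Zeta
variable {n m : ℕ} (hn : 1 < n) (hm : 1 < m)

def pt1 (j : ℕ) : ZZ := ⟨(OrderDual.toDual (j : ℤ), (j : ℤ)), Or.inl rfl⟩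
def pt2 (j : ℕ) : ZZ := ⟨(OrderDual.toDual ((j : ℤ) + 1), (j : ℤ)), by
  right
  show (j:ℤ) + 1 = (j:ℤ) + 1
  rfl⟩

lemma pt2_le_pt1 (j : ℕ) : pt2 j ≤ pt1 j :=
  ZZ.le_iff.mpr ⟨by show (j:ℤ) ≤ (j:ℤ) + 1; omega, by show (j:ℤ) ≤ (j:ℤ); omega⟩

lemma pt2_le_pt1' {i j : ℕ} (h : j = i + 1) : pt2 i ≤ pt1 j :=
  ZZ.le_iff.mpr ⟨by show (j:ℤ) ≤ (i:ℤ) + 1; omega, by show (i:ℤ) ≤ (j:ℤ); omega⟩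

lemma emod_shift (b : ℤ) : (b + ((n:ℤ)+m-1)) % ((n:ℤ)+m-1) = b % ((n:ℤ)+m-1) := by
  conv_lhs => rw [show b + ((n:ℤ)+m-1) = b + ((n:ℤ)+m-1) * 1 by ring]
  exact Int.add_mul_emod_self_left b ((n:ℤ)+(m:ℤ)-1) 1

lemma emod_small (b : ℤ) (h1 : 0 ≤ b) (h2 : b < (n:ℤ)+m-1) : b % ((n:ℤ)+m-1) = b :=
  Int.emod_eq_of_lt h1 h2

-- ζ value lemmas
lemma z1a (j : ℕ) (h1 : 1 ≤ j) (h2 : j ≤ n+m-2) :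
    zeta n m hn hm (pt1 j) = bp hn hm j := by
  apply Subtype.ext
  show zetaFun n m (j:ℤ) (j:ℤ) = min j (n+m-1)
  have hmod : (j:ℤ) % ((n:ℤ)+m-1) = j := emod_small _ (by omega) (by omega)
  unfold zetaFun
  rw [hmod]
  split_ifs <;> omega

lemma z1b : zeta n m hn hm (pt1 (n+m-1)) = bp hn hm (n+m-1) := by
  apply Subtype.ext
  show zetaFun n m ((n+m-1 : ℕ):ℤ) ((n+m-1 : ℕ):ℤ) = min (n+m-1) (n+m-1)
  have hmod : ((n+m-1 : ℕ):ℤ) % ((n:ℤ)+m-1) = 0 := by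
    have h : ((n+m-1 : ℕ):ℤ) = (n:ℤ)+m-1 := by omega
    rw [h]
    exact Int.emod_self
  unfold zetaFun
  rw [hmod]
  split_ifs <;> omega

lemma z1c (j : ℕ) (h1 : 1 ≤ j) (h2 : j ≤ n+m-2) :
    zeta n m hn hm (pt1 (n+m-1+j)) = bp hn hm j := by
  apply Subtype.ext
  show zetaFun n m ((n+m-1+j : ℕ):ℤ) ((n+m-1+j : ℕ):ℤ) = min j (n+m-1)
  have hcast : ((n+m-1+j : ℕ):ℤ) = (j:ℤ) + ((n:ℤ)+m-1) := by omega
  have hmod : ((n+m-1+j : ℕ):ℤ) % ((n:ℤ)+m-1) = j := by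
    rw [hcast, emod_shift, emod_small _ (by omega) (by omega)]
  unfold zetaFun
  rw [hmod]
  split_ifs <;> omega

lemma z2a : zeta n m hn hm (pt2 0) = bp hn hm 0 := by
  apply Subtype.ext
  show zetaFun n m (((0:ℕ):ℤ)+1) ((0:ℕ):ℤ) = min 0 (n+m-1)
  have hmod : (((0:ℕ)):ℤ) % ((n:ℤ)+m-1) = 0 := by
    rw [show (((0:ℕ)):ℤ) = 0 by omega]
    exact Int.zero_emod _
  unfold zetaFun
  rw [hmod]
  split_ifs <;> omega

lemma z2b (j : ℕ) (h1 : 1 ≤ j) (h2 : j ≤ n-1) :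
    zeta n m hn hm (pt2 j) = bp hn hm j := by
  apply Subtype.ext
  show zetaFun n m ((j:ℤ)+1) (j:ℤ) = min j (n+m-1)
  have hmod : (j:ℤ) % ((n:ℤ)+m-1) = j := emod_small _ (by omega) (by omega)
  unfold zetaFun
  rw [hmod]
  split_ifs <;> omega

lemma z2c (j : ℕ) (h1 : n ≤ j) (h2 : j ≤ n+m-2) :
    zeta n m hn hm (pt2 j) = bp hn hm (j+1) := by
  apply Subtype.ext
  show zetaFun n m ((j:ℤ)+1) (j:ℤ) = min (j+1) (n+m-1)
  have hmod : (j:ℤ) % ((n:ℤ)+m-1) = j := emod_small _ (by omega) (by omega)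
  unfold zetaFun
  rw [hmod]
  split_ifs <;> omega

lemma z2d : zeta n m hn hm (pt2 (n+m-1)) = bp hn hm 0 := by
  apply Subtype.ext
  show zetaFun n m (((n+m-1 : ℕ):ℤ)+1) ((n+m-1 : ℕ):ℤ) = min 0 (n+m-1)
  have hmod : ((n+m-1 : ℕ):ℤ) % ((n:ℤ)+m-1) = 0 := by
    rw [show ((n+m-1 : ℕ):ℤ) = (n:ℤ)+m-1 by omega]
    exact Int.emod_self
  unfold zetaFun
  rw [hmod]
  split_ifs <;> omega

lemma z2e (j : ℕ) (h1 : 1 ≤ j) (h2 : j ≤ n-1) :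
    zeta n m hn hm (pt2 (n+m-1+j)) = bp hn hm j := by
  apply Subtype.ext
  show zetaFun n m (((n+m-1+j : ℕ):ℤ)+1) ((n+m-1+j : ℕ):ℤ) = min j (n+m-1)
  have hmod : ((n+m-1+j : ℕ):ℤ) % ((n:ℤ)+m-1) = j := by
    rw [show ((n+m-1+j : ℕ):ℤ) = (j:ℤ) + ((n:ℤ)+m-1) by omega, emod_shift,
      emod_small _ (by omega) (by omega)]
  unfold zetaFun
  rw [hmod]
  split_ifs <;> omega

end Zeta

section Extract
variable {n m : ℕ} (hn : 1 < n) (hm : 1 < m)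
variable {k : Type} [Field k]
variable (hz : Monotone (zeta n m hn hm))
variable (M N' : Bipath n m ⥤ ModuleCat k)
variable (Ψ : (restrictAlong k hz).obj M ≅ (restrictAlong k hz).obj N')

lemma up_le {i j : ℕ} (h1 : n ≤ j) (h2 : j ≤ i) (h3 : i ≤ n+m-1) :
    bp hn hm i ≤ bp hn hm j := by
  apply bp_le; unfold bipathLE; omega

lemma wrap_le : bp hn hm 0 ≤ bp hn hm (n+m-1) := by
  apply bp_le; unfold bipathLE; omega

noncomputable def phiAt (p : ZZ) {j : ℕ} (ep : zeta n m hn hm p = bp hn hm j) :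
    M.obj (bp hn hm j) ⟶ N'.obj (bp hn hm j) :=
  eqToHom (congrArg M.obj ep.symm) ≫
    ((Ψ.app p).hom : M.obj (zeta n m hn hm p) ⟶ N'.obj (zeta n m hn hm p)) ≫
    eqToHom (congrArg N'.obj ep)

lemma isIso_phiAt (p : ZZ) {j : ℕ} (ep : zeta n m hn hm p = bp hn hm j) :
    IsIso (phiAt hn hm hz M N' Ψ p ep) := by
  unfold phiAt
  exact @IsIso.comp_isIso _ _ _ _ _ _ _ (Iso.isIso_hom (eqToIso (congrArg M.obj ep.symm)))
    (@IsIso.comp_isIso _ _ _ _ _ _ _ (Iso.isIso_hom (Ψ.app p))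
      (Iso.isIso_hom (eqToIso (congrArg N'.obj ep))))

lemma phi_square {p q : ZZ} (hpq : p ≤ q) {x y : ℕ}
    (ep : zeta n m hn hm p = bp hn hm x) (eq' : zeta n m hn hm q = bp hn hm y)
    (hxy : bp hn hm x ≤ bp hn hm y) :
    mor hn hm M hxy ≫ phiAt hn hm hz M N' Ψ q eq'
      = phiAt hn hm hz M N' Ψ p ep ≫ mor hn hm N' hxy := by
  have natural := Ψ.hom.naturality (homOfLE hpq)
  have hMmap : ((restrictAlong k hz).obj M).map (homOfLE hpq)
      = (eqToHom (congrArg M.obj ep) ≫ mor hn hm M hxy ≫ eqToHom (congrArg M.obj eq'.symm) :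
          M.obj (zeta n m hn hm p) ⟶ M.obj (zeta n m hn hm q)) := by
    show M.map (homOfLE (hz hpq) : zeta n m hn hm p ⟶ zeta n m hn hm q) = _
    rw [show (homOfLE (hz hpq) : zeta n m hn hm p ⟶ zeta n m hn hm q)
        = eqToHom ep ≫ homOfLE hxy ≫ eqToHom eq'.symm
        from Subsingleton.elim _ _]
    simp only [Functor.map_comp, eqToHom_map]
    rfl
  have hNmap : ((restrictAlong k hz).obj N').map (homOfLE hpq)
      = (eqToHom (congrArg N'.obj ep) ≫ mor hn hm N' hxy ≫ eqToHom (congrArg N'.obj eq'.symm) :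
          N'.obj (zeta n m hn hm p) ⟶ N'.obj (zeta n m hn hm q)) := by
    show N'.map (homOfLE (hz hpq) : zeta n m hn hm p ⟶ zeta n m hn hm q) = _
    rw [show (homOfLE (hz hpq) : zeta n m hn hm p ⟶ zeta n m hn hm q)
        = eqToHom ep ≫ homOfLE hxy ≫ eqToHom eq'.symm
        from Subsingleton.elim _ _]
    simp only [Functor.map_comp, eqToHom_map]
    rfl
  rw [hMmap, hNmap] at natural
  have key := congrArg (fun (f : M.obj (zeta n m hn hm p) ⟶ N'.obj (zeta n m hn hm q)) =>
      eqToHom (congrArg M.obj ep.symm) ≫ f ≫ eqToHom (congrArg N'.obj eq')) natural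
  dsimp only [restrictAlong, Functor.whiskeringLeft_obj_obj, Functor.comp_obj, Monotone.functor_obj] at key
  obtain ⟨gp, hgp⟩ : ∃ g : M.obj (zeta n m hn hm p) ⟶ N'.obj (zeta n m hn hm p),
    Ψ.hom.app p = g := ⟨_, rfl⟩
  obtain ⟨gq, hgq⟩ : ∃ g : M.obj (zeta n m hn hm q) ⟶ N'.obj (zeta n m hn hm q),
    Ψ.hom.app q = g := ⟨_, rfl⟩
  rw [hgp, hgq] at key
  simp only [Category.assoc, eqToHom_trans, eqToHom_trans_assoc, eqToHom_refl,
    Category.id_comp, Category.comp_id] at key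
  unfold phiAt
  simp only [Category.assoc, Iso.app_hom]
  rw [hgp, hgq]
  exact key

lemma phi_congr {p q : ZZ} (hpq : p ≤ q) {x : ℕ}
    (ep : zeta n m hn hm p = bp hn hm x) (eq' : zeta n m hn hm q = bp hn hm x) :
    phiAt hn hm hz M N' Ψ p ep = phiAt hn hm hz M N' Ψ q eq' := by
  have h := phi_square hn hm hz M N' Ψ hpq ep eq' (le_refl (bp hn hm x))
  rw [mor_id hn hm M, mor_id hn hm N'] at h
  simpa using h.symm

noncomputable def phi0 : ∀ (j : ℕ), M.obj (bp hn hm j) ⟶ N'.obj (bp hn hm j)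
  | 0 => phiAt hn hm hz M N' Ψ (pt2 0) (z2a hn hm)
  | (j+1) =>
    if h : j + 1 ≤ n then
      phiAt hn hm hz M N' Ψ (pt1 (j+1)) (z1a hn hm (j+1) (by omega) (by omega))
    else if h2 : j + 1 ≤ n+m-1 then
      phiAt hn hm hz M N' Ψ (pt2 j) (z2c hn hm j (by omega) (by omega))
    else 0

noncomputable def phi1 : ∀ (j : ℕ), M.obj (bp hn hm j) ⟶ N'.obj (bp hn hm j)
  | 0 => phiAt hn hm hz M N' Ψ (pt2 (n+m-1)) (z2d hn hm)
  | (j+1) =>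
    if h : j + 1 ≤ n then
      phiAt hn hm hz M N' Ψ (pt1 (n+m-1+(j+1))) (z1c hn hm (j+1) (by omega) (by omega))
    else 0

lemma phi0_zero : phi0 hn hm hz M N' Ψ 0 = phiAt hn hm hz M N' Ψ (pt2 0) (z2a hn hm) := rfl

lemma phi0_low (j : ℕ) (h1 : 1 ≤ j) (h2 : j ≤ n)
    (ep : zeta n m hn hm (pt1 j) = bp hn hm j) :
    phi0 hn hm hz M N' Ψ j = phiAt hn hm hz M N' Ψ (pt1 j) ep := by
  cases j with
  | zero => omega
  | succ i =>
      show (if h : i + 1 ≤ n then _ else _) = _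
      rw [dif_pos h2]

lemma phi0_up (j : ℕ) (h1 : n ≤ j) (h2 : j+1 ≤ n+m-1)
    (ep : zeta n m hn hm (pt2 j) = bp hn hm (j+1)) :
    phi0 hn hm hz M N' Ψ (j+1) = phiAt hn hm hz M N' Ψ (pt2 j) ep := by
  show (if h : j + 1 ≤ n then _ else _) = _
  rw [dif_neg (by omega), dif_pos (by omega)]

lemma phi1_zero : phi1 hn hm hz M N' Ψ 0
    = phiAt hn hm hz M N' Ψ (pt2 (n+m-1)) (z2d hn hm) := rfl

lemma phi1_low (j : ℕ) (h1 : 1 ≤ j) (h2 : j ≤ n)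
    (ep : zeta n m hn hm (pt1 (n+m-1+j)) = bp hn hm j) :
    phi1 hn hm hz M N' Ψ j = phiAt hn hm hz M N' Ψ (pt1 (n+m-1+j)) ep := by
  cases j with
  | zero => omega
  | succ i =>
      show (if h : i + 1 ≤ n then _ else _) = _
      rw [dif_pos h2]

lemma isIso_phi0 (j : ℕ) (hj : j ≤ n+m-1) : IsIso (phi0 hn hm hz M N' Ψ j) := by
  cases j with
  | zero => exact isIso_phiAt hn hm hz M N' Ψ (pt2 0) (z2a hn hm)
  | succ i =>
      show IsIso (if h : i + 1 ≤ n then _ else _)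
      by_cases h : i + 1 ≤ n
      · rw [dif_pos h]; exact isIso_phiAt hn hm hz M N' Ψ _ _
      · rw [dif_neg h, dif_pos (by omega)]; exact isIso_phiAt hn hm hz M N' Ψ _ _

lemma isIso_phi1 (j : ℕ) (hj : j ≤ n) : IsIso (phi1 hn hm hz M N' Ψ j) := by
  cases j with
  | zero => exact isIso_phiAt hn hm hz M N' Ψ (pt2 (n+m-1)) (z2d hn hm)
  | succ i =>
      show IsIso (if h : i + 1 ≤ n then _ else _)
      rw [dif_pos hj]
      exact isIso_phiAt hn hm hz M N' Ψ _ _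

-- edge squares
lemma sq0_low (j : ℕ) (h : j + 1 ≤ n) :
    mor hn hm M (low_le hn hm (Nat.le_succ j) h) ≫ phi0 hn hm hz M N' Ψ (j+1)
      = phi0 hn hm hz M N' Ψ j ≫ mor hn hm N' (low_le hn hm (Nat.le_succ j) h) := by
  rw [phi0_low hn hm hz M N' Ψ (j+1) (by omega) h (z1a hn hm (j+1) (by omega) (by omega))]
  cases j with
  | zero =>
      rw [phi0_zero]
      exact phi_square hn hm hz M N' Ψ (pt2_le_pt1' rfl) _ _ _
  | succ i =>
      rw [phi0_low hn hm hz M N' Ψ (i+1) (by omega) (by omega)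
        (z1a hn hm (i+1) (by omega) (by omega))]
      rw [phi_congr hn hm hz M N' Ψ (pt2_le_pt1 (i+1))
        (z2b hn hm (i+1) (by omega) (by omega)) (z1a hn hm (i+1) (by omega) (by omega)) |>.symm]
      exact phi_square hn hm hz M N' Ψ (pt2_le_pt1' rfl) _ _ _

lemma sq0_up (j : ℕ) (h1 : n ≤ j) (h2 : j + 1 ≤ n+m-1) :
    mor hn hm M (up_le hn hm h1 (Nat.le_succ j) h2) ≫ phi0 hn hm hz M N' Ψ j
      = phi0 hn hm hz M N' Ψ (j+1) ≫ mor hn hm N' (up_le hn hm h1 (Nat.le_succ j) h2) := by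
  rw [phi0_up hn hm hz M N' Ψ j h1 h2 (z2c hn hm j h1 (by omega))]
  rcases Nat.eq_or_lt_of_le h1 with heq | hlt
  · subst heq
    rw [phi0_low hn hm hz M N' Ψ n (by omega) le_rfl (z1a hn hm n (by omega) (by omega))]
    exact phi_square hn hm hz M N' Ψ (pt2_le_pt1 n) _ _ _
  · obtain ⟨i, rfl⟩ : ∃ i, j = i + 1 := ⟨j - 1, by omega⟩
    rw [phi0_up hn hm hz M N' Ψ i (by omega) (by omega) (z2c hn hm i (by omega) (by omega))]
    rw [phi_congr hn hm hz M N' Ψ (pt2_le_pt1' rfl)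
      (z2c hn hm i (by omega) (by omega)) (z1a hn hm (i+1) (by omega) (by omega))]
    exact phi_square hn hm hz M N' Ψ (pt2_le_pt1 (i+1)) _ _ _

lemma phi0_top_aux (j : ℕ) (hj : j = n+m-1)
    (ep : zeta n m hn hm (pt1 j) = bp hn hm j) :
    phi0 hn hm hz M N' Ψ j = phiAt hn hm hz M N' Ψ (pt1 j) ep := by
  obtain ⟨i, rfl⟩ : ∃ i, j = i+1 := ⟨j-1, by omega⟩
  rw [phi0_up hn hm hz M N' Ψ i (by omega) (by omega) (z2c hn hm i (by omega) (by omega))]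
  exact phi_congr hn hm hz M N' Ψ (pt2_le_pt1' rfl) _ ep

lemma phi0_top : phi0 hn hm hz M N' Ψ (n+m-1)
    = phiAt hn hm hz M N' Ψ (pt1 (n+m-1)) (z1b hn hm) :=
  phi0_top_aux hn hm hz M N' Ψ (n+m-1) rfl (z1b hn hm)

lemma sq_wrap :
    mor hn hm M (wrap_le hn hm) ≫ phi0 hn hm hz M N' Ψ (n+m-1)
      = phi1 hn hm hz M N' Ψ 0 ≫ mor hn hm N' (wrap_le hn hm) := by
  rw [phi0_top, phi1_zero]
  exact phi_square hn hm hz M N' Ψ (pt2_le_pt1 (n+m-1)) (z2d hn hm) (z1b hn hm) (wrap_le hn hm)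

lemma sq1_low (j : ℕ) (h : j + 1 ≤ n) :
    mor hn hm M (low_le hn hm (Nat.le_succ j) h) ≫ phi1 hn hm hz M N' Ψ (j+1)
      = phi1 hn hm hz M N' Ψ j ≫ mor hn hm N' (low_le hn hm (Nat.le_succ j) h) := by
  rw [phi1_low hn hm hz M N' Ψ (j+1) (by omega) h (z1c hn hm (j+1) (by omega) (by omega))]
  cases j with
  | zero =>
      rw [phi1_zero]
      exact phi_square hn hm hz M N' Ψ (pt2_le_pt1' rfl) _ _ _
  | succ i =>
      rw [phi1_low hn hm hz M N' Ψ (i+1) (by omega) (by omega)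
        (z1c hn hm (i+1) (by omega) (by omega))]
      rw [phi_congr hn hm hz M N' Ψ (pt2_le_pt1 (n+m-1+(i+1)))
        (z2e hn hm (i+1) (by omega) (by omega)) (z1c hn hm (i+1) (by omega) (by omega)) |>.symm]
      exact phi_square hn hm hz M N' Ψ (pt2_le_pt1' rfl) _ _ _

lemma sq0_low_comp (l j : ℕ) (hl : l ≤ j) (hj : j ≤ n) :
    mor hn hm M (low_le hn hm hl hj) ≫ phi0 hn hm hz M N' Ψ j
      = phi0 hn hm hz M N' Ψ l ≫ mor hn hm N' (low_le hn hm hl hj) := by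
  revert hj
  induction j, hl using Nat.le_induction with
  | base =>
      intro hj
      rw [mor_id hn hm M, mor_id hn hm N']
      simp
  | succ j hl ih =>
      intro hj
      have hjn : j ≤ n := by omega
      rw [show mor hn hm M (low_le hn hm (Nat.le_succ_of_le hl) hj)
          = mor hn hm M (low_le hn hm hl hjn) ≫ mor hn hm M (low_le hn hm (Nat.le_succ j) hj)
          from mor_comp hn hm M _ _,
        show mor hn hm N' (low_le hn hm (Nat.le_succ_of_le hl) hj)
          = mor hn hm N' (low_le hn hm hl hjn) ≫ mor hn hm N' (low_le hn hm (Nat.le_succ j) hj)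
          from mor_comp hn hm N' _ _]
      rw [Category.assoc, sq0_low hn hm hz M N' Ψ j hj, ← Category.assoc, ih hjn,
        Category.assoc]

lemma sq1_low_comp (l j : ℕ) (hl : l ≤ j) (hj : j ≤ n) :
    mor hn hm M (low_le hn hm hl hj) ≫ phi1 hn hm hz M N' Ψ j
      = phi1 hn hm hz M N' Ψ l ≫ mor hn hm N' (low_le hn hm hl hj) := by
  revert hj
  induction j, hl using Nat.le_induction with
  | base =>
      intro hj
      rw [mor_id hn hm M, mor_id hn hm N']
      simp
  | succ j hl ih =>
      intro hj
      have hjn : j ≤ n := by omega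
      rw [show mor hn hm M (low_le hn hm (Nat.le_succ_of_le hl) hj)
          = mor hn hm M (low_le hn hm hl hjn) ≫ mor hn hm M (low_le hn hm (Nat.le_succ j) hj)
          from mor_comp hn hm M _ _,
        show mor hn hm N' (low_le hn hm (Nat.le_succ_of_le hl) hj)
          = mor hn hm N' (low_le hn hm hl hjn) ≫ mor hn hm N' (low_le hn hm (Nat.le_succ j) hj)
          from mor_comp hn hm N' _ _]
      rw [Category.assoc, sq1_low hn hm hz M N' Ψ j hj, ← Category.assoc, ih hjn,
        Category.assoc]

lemma sq0_up_comp (i j : ℕ) (h1 : n ≤ j) (h2 : j ≤ i) (h3 : i ≤ n+m-1) :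
    mor hn hm M (up_le hn hm h1 h2 h3) ≫ phi0 hn hm hz M N' Ψ j
      = phi0 hn hm hz M N' Ψ i ≫ mor hn hm N' (up_le hn hm h1 h2 h3) := by
  revert h3
  induction i, h2 using Nat.le_induction with
  | base =>
      intro h3
      rw [mor_id hn hm M, mor_id hn hm N']
      simp
  | succ i h2 ih =>
      intro h3
      have hi : i ≤ n+m-1 := by omega
      rw [show mor hn hm M (up_le hn hm h1 (Nat.le_succ_of_le h2) h3)
          = mor hn hm M (up_le hn hm (by omega) (Nat.le_succ i) h3)
            ≫ mor hn hm M (up_le hn hm h1 h2 hi)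
          from mor_comp hn hm M _ _,
        show mor hn hm N' (up_le hn hm h1 (Nat.le_succ_of_le h2) h3)
          = mor hn hm N' (up_le hn hm (by omega) (Nat.le_succ i) h3)
            ≫ mor hn hm N' (up_le hn hm h1 h2 hi)
          from mor_comp hn hm N' _ _]
      rw [Category.assoc, ih hi, ← Category.assoc,
        sq0_up hn hm hz M N' Ψ i (by omega) (by omega), Category.assoc]

end Extract

section Assemble
variable {n m : ℕ} (hn : 1 < n) (hm : 1 < m)
variable {k : Type} [Field k]
variable (hz : Monotone (zeta n m hn hm))
variable (M N' : Bipath n m ⥤ ModuleCat k)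

lemma happly {A B : ModuleCat k} {f g : A ⟶ B} (h : f = g) (x : A) : f x = g x := by rw [h]

lemma iso_hom_inv_apply {A B : ModuleCat k} (e : A ≅ B) (x : A) : e.inv (e.hom x) = x :=
  happly e.hom_inv_id x

lemma iso_inv_hom_apply {A B : ModuleCat k} (e : A ≅ B) (x : B) : e.hom (e.inv x) = x :=
  happly e.inv_hom_id x

variable (Ψ : (restrictAlong k hz).obj M ≅ (restrictAlong k hz).obj N')

include hn hm hz Ψ in
lemma backward_iso (hfdM : ∀ p, FiniteDimensional k (M.obj p)) : Nonempty (M ≅ N') := by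
  haveI I0n : IsIso (phi0 hn hm hz M N' Ψ n) := isIso_phi0 hn hm hz M N' Ψ n (by omega)
  haveI I1n : IsIso (phi1 hn hm hz M N' Ψ n) := isIso_phi1 hn hm hz M N' Ψ n le_rfl
  set e0 : M.obj (bp hn hm n) ≅ N'.obj (bp hn hm n) := asIso (phi0 hn hm hz M N' Ψ n) with he0
  set e1 : M.obj (bp hn hm n) ≅ N'.obj (bp hn hm n) := asIso (phi1 hn hm hz M N' Ψ n) with he1
  set E : M.obj (bp hn hm n) ≃ₗ[k] M.obj (bp hn hm n) := (e0 ≪≫ e1.symm).toLinearEquiv with hE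
  have hEapp : ∀ x, E x = e1.inv (phi0 hn hm hz M N' Ψ n x) := fun x => rfl
  -- the key commutation: phi0 and phi1 agree after the full lower composite
  have hkey : ∀ x, phi0 hn hm hz M N' Ψ n (mor hn hm M (low_le hn hm (Nat.zero_le n) le_rfl) x)
      = phi1 hn hm hz M N' Ψ n (mor hn hm M (low_le hn hm (Nat.zero_le n) le_rfl) x) := by
    intro x
    have t1 : phi0 hn hm hz M N' Ψ n (mor hn hm M (up_le hn hm le_rfl (by omega) le_rfl)
          (mor hn hm M (wrap_le hn hm) x))
        = mor hn hm N' (up_le hn hm le_rfl (by omega) le_rfl)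
            (phi0 hn hm hz M N' Ψ (n+m-1) (mor hn hm M (wrap_le hn hm) x)) :=
      happly (sq0_up_comp hn hm hz M N' Ψ (n+m-1) n le_rfl (by omega) le_rfl)
        (mor hn hm M (wrap_le hn hm) x)
    have t2 : phi0 hn hm hz M N' Ψ (n+m-1) (mor hn hm M (wrap_le hn hm) x)
        = mor hn hm N' (wrap_le hn hm) (phi1 hn hm hz M N' Ψ 0 x) :=
      happly (sq_wrap hn hm hz M N' Ψ) x
    have t3 : phi1 hn hm hz M N' Ψ n (mor hn hm M (low_le hn hm (Nat.zero_le n) le_rfl) x)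
        = mor hn hm N' (low_le hn hm (Nat.zero_le n) le_rfl) (phi1 hn hm hz M N' Ψ 0 x) :=
      happly (sq1_low_comp hn hm hz M N' Ψ 0 n (Nat.zero_le n) le_rfl) x
    have e1' : mor hn hm M (low_le hn hm (Nat.zero_le n) le_rfl) x
        = mor hn hm M (up_le hn hm le_rfl (by omega) le_rfl) (mor hn hm M (wrap_le hn hm) x) :=
      mor_apply_comp hn hm M (wrap_le hn hm) (up_le hn hm le_rfl (by omega) le_rfl) x
    have e2' : mor hn hm N' (low_le hn hm (Nat.zero_le n) le_rfl)
          (phi1 hn hm hz M N' Ψ 0 x)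
        = mor hn hm N' (up_le hn hm le_rfl (by omega) le_rfl)
            (mor hn hm N' (wrap_le hn hm) (phi1 hn hm hz M N' Ψ 0 x)) :=
      mor_apply_comp hn hm N' (wrap_le hn hm) (up_le hn hm le_rfl (by omega) le_rfl) _
    calc phi0 hn hm hz M N' Ψ n (mor hn hm M (low_le hn hm (Nat.zero_le n) le_rfl) x)
        = phi0 hn hm hz M N' Ψ n (mor hn hm M (up_le hn hm le_rfl (by omega) le_rfl)
            (mor hn hm M (wrap_le hn hm) x)) := by rw [← e1']
      _ = mor hn hm N' (up_le hn hm le_rfl (by omega) le_rfl)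
            (phi0 hn hm hz M N' Ψ (n+m-1) (mor hn hm M (wrap_le hn hm) x)) := t1
      _ = mor hn hm N' (up_le hn hm le_rfl (by omega) le_rfl)
            (mor hn hm N' (wrap_le hn hm) (phi1 hn hm hz M N' Ψ 0 x)) := by rw [t2]
      _ = mor hn hm N' (low_le hn hm (Nat.zero_le n) le_rfl) (phi1 hn hm hz M N' Ψ 0 x) := by
            rw [← e2']
      _ = phi1 hn hm hz M N' Ψ n (mor hn hm M (low_le hn hm (Nat.zero_le n) le_rfl) x) :=
            t3.symm
  have hE2 : ∀ x, E (mor hn hm M (low_le hn hm (Nat.zero_le n) le_rfl) x)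
      = mor hn hm M (low_le hn hm (Nat.zero_le n) le_rfl) x := by
    intro x
    rw [hEapp, hkey x]
    exact iso_hom_inv_apply e1 _
  have hE1 : ∀ l (hl : l ≤ n),
      Submodule.map (E.toLinearMap) (rng hn hm M (low_le hn hm hl le_rfl))
        ≤ rng hn hm M (low_le hn hm hl le_rfl) := by
    intro l hl
    rintro x ⟨y, hy, rfl⟩
    obtain ⟨w, rfl⟩ := hy
    haveI I1l : IsIso (phi1 hn hm hz M N' Ψ l) := isIso_phi1 hn hm hz M N' Ψ l hl
    set u := (asIso (phi1 hn hm hz M N' Ψ l)).inv (phi0 hn hm hz M N' Ψ l w) with hu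
    refine ⟨u, ?_⟩
    have h1 : phi1 hn hm hz M N' Ψ l u = phi0 hn hm hz M N' Ψ l w :=
      iso_inv_hom_apply (asIso (phi1 hn hm hz M N' Ψ l)) _
    have h2 : phi0 hn hm hz M N' Ψ n (mor hn hm M (low_le hn hm hl le_rfl) w)
        = mor hn hm N' (low_le hn hm hl le_rfl) (phi0 hn hm hz M N' Ψ l w) :=
      happly (sq0_low_comp hn hm hz M N' Ψ l n hl le_rfl) w
    have h3 : phi1 hn hm hz M N' Ψ n (mor hn hm M (low_le hn hm hl le_rfl) u)
        = mor hn hm N' (low_le hn hm hl le_rfl) (phi1 hn hm hz M N' Ψ l u) :=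
      happly (sq1_low_comp hn hm hz M N' Ψ l n hl le_rfl) u
    have hfinal : E (mor hn hm M (low_le hn hm hl le_rfl) w)
        = mor hn hm M (low_le hn hm hl le_rfl) u := by
      rw [hEapp, h2, ← h1, ← h3]
      exact iso_hom_inv_apply e1 _
    exact hfinal.symm
  obtain ⟨d, hd0, hdn, hdnat⟩ := chain_fix hn hm M hfdM E hE1 hE2
  set dh : ∀ j : ℕ, (M.obj (bp hn hm j) ⟶ M.obj (bp hn hm j)) :=
    fun j => ModuleCat.ofHom (d j).toLinearMap with hdh
  set dhs : ∀ j : ℕ, (M.obj (bp hn hm j) ⟶ M.obj (bp hn hm j)) :=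
    fun j => ModuleCat.ofHom (d j).symm.toLinearMap with hdhs
  -- the corrected components
  set A : ∀ j : ℕ, (M.obj (bp hn hm j) ⟶ N'.obj (bp hn hm j)) :=
    fun j => if j < n
      then dh j
            ≫ phi1 hn hm hz M N' Ψ j
      else phi0 hn hm hz M N' Ψ j with hA
  have hAlow : ∀ j, j < n →
      A j = dh j
            ≫ phi1 hn hm hz M N' Ψ j := by
    intro j h
    rw [hA]
    show (if j < n
      then dh j
            ≫ phi1 hn hm hz M N' Ψ j
      else phi0 hn hm hz M N' Ψ j) = _
    rw [if_pos h]
  have hAup : ∀ j, ¬ (j < n) → A j = phi0 hn hm hz M N' Ψ j := by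
    intro j h
    rw [hA]
    show (if j < n
      then dh j
            ≫ phi1 hn hm hz M N' Ψ j
      else phi0 hn hm hz M N' Ψ j) = _
    rw [if_neg h]
  have hAlow_apply : ∀ j (h : j < n) x, A j x = phi1 hn hm hz M N' Ψ j (d j x) := by
    intro j h x
    rw [hAlow j h]
    rfl
  -- edge squares for A
  have sqA_low : ∀ j (h : j + 1 ≤ n),
      mor hn hm M (low_le hn hm (Nat.le_succ j) h) ≫ A (j+1)
        = A j ≫ mor hn hm N' (low_le hn hm (Nat.le_succ j) h) := by
    intro j h
    ext x
    show A (j+1) (mor hn hm M (low_le hn hm (Nat.le_succ j) h) x)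
      = mor hn hm N' (low_le hn hm (Nat.le_succ j) h) (A j x)
    have hdx := hdnat j h x
    rcases Nat.lt_or_ge (j+1) n with hlt | hge
    · rw [hAlow_apply (j+1) hlt, hAlow_apply j (by omega), hdx]
      exact happly (sq1_low hn hm hz M N' Ψ j h) (d j x)
    · have hjn : j + 1 = n := by omega
      subst hjn
      rw [hAup (j+1) (by omega), hAlow_apply j (by omega)]
      have h2' : ∀ y, phi1 hn hm hz M N' Ψ (j+1) (E y) = phi0 hn hm hz M N' Ψ (j+1) y := by
        intro y
        rw [hEapp]
        exact iso_inv_hom_apply e1 _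
      calc phi0 hn hm hz M N' Ψ (j+1) (mor hn hm M (low_le hn hm (Nat.le_succ j) h) x)
          = phi1 hn hm hz M N' Ψ (j+1)
              (E (mor hn hm M (low_le hn hm (Nat.le_succ j) h) x)) := (h2' _).symm
        _ = phi1 hn hm hz M N' Ψ (j+1)
              (d (j+1) (mor hn hm M (low_le hn hm (Nat.le_succ j) h) x)) := by rw [hdn]
        _ = phi1 hn hm hz M N' Ψ (j+1)
              (mor hn hm M (low_le hn hm (Nat.le_succ j) h) (d j x)) := by rw [hdx]
        _ = mor hn hm N' (low_le hn hm (Nat.le_succ j) h) (phi1 hn hm hz M N' Ψ j (d j x)) :=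
              happly (sq1_low hn hm hz M N' Ψ j h) (d j x)
  have sqA_up : ∀ j (h1 : n ≤ j) (h2 : j + 1 ≤ n+m-1),
      mor hn hm M (up_le hn hm h1 (Nat.le_succ j) h2) ≫ A j
        = A (j+1) ≫ mor hn hm N' (up_le hn hm h1 (Nat.le_succ j) h2) := by
    intro j h1 h2
    rw [hAup j (by omega), hAup (j+1) (by omega)]
    exact sq0_up hn hm hz M N' Ψ j h1 h2
  have sqA_wrap :
      mor hn hm M (wrap_le hn hm) ≫ A (n+m-1) = A 0 ≫ mor hn hm N' (wrap_le hn hm) := by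
    rw [hAup (n+m-1) (by omega)]
    ext x
    show phi0 hn hm hz M N' Ψ (n+m-1) (mor hn hm M (wrap_le hn hm) x)
      = mor hn hm N' (wrap_le hn hm) (A 0 x)
    rw [hAlow_apply 0 (by omega), hd0 x]
    exact happly (sq_wrap hn hm hz M N' Ψ) x
  -- composite squares for A
  have sqA_low_comp : ∀ l j (hl : l ≤ j) (hj : j ≤ n),
      mor hn hm M (low_le hn hm hl hj) ≫ A j = A l ≫ mor hn hm N' (low_le hn hm hl hj) := by
    intro l j hl
    induction j, hl using Nat.le_induction with
    | base =>
        intro hj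
        rw [mor_id hn hm M, mor_id hn hm N']
        simp
    | succ j hl ih =>
        intro hj
        have hjn : j ≤ n := by omega
        rw [show mor hn hm M (low_le hn hm (Nat.le_succ_of_le hl) hj)
            = mor hn hm M (low_le hn hm hl hjn) ≫ mor hn hm M (low_le hn hm (Nat.le_succ j) hj)
            from mor_comp hn hm M _ _,
          show mor hn hm N' (low_le hn hm (Nat.le_succ_of_le hl) hj)
            = mor hn hm N' (low_le hn hm hl hjn) ≫ mor hn hm N' (low_le hn hm (Nat.le_succ j) hj)
            from mor_comp hn hm N' _ _]
        rw [Category.assoc, sqA_low j hj, ← Category.assoc, ih hjn, Category.assoc]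
  have sqA_up_comp : ∀ i j (h1 : n ≤ j) (h2 : j ≤ i) (h3 : i ≤ n+m-1),
      mor hn hm M (up_le hn hm h1 h2 h3) ≫ A j = A i ≫ mor hn hm N' (up_le hn hm h1 h2 h3) := by
    intro i j h1 h2
    induction i, h2 using Nat.le_induction with
    | base =>
        intro h3
        rw [mor_id hn hm M, mor_id hn hm N']
        simp
    | succ i h2 ih =>
        intro h3
        have hi : i ≤ n+m-1 := by omega
        rw [show mor hn hm M (up_le hn hm h1 (Nat.le_succ_of_le h2) h3)
            = mor hn hm M (up_le hn hm (by omega) (Nat.le_succ i) h3)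
              ≫ mor hn hm M (up_le hn hm h1 h2 hi)
            from mor_comp hn hm M _ _,
          show mor hn hm N' (up_le hn hm h1 (Nat.le_succ_of_le h2) h3)
            = mor hn hm N' (up_le hn hm (by omega) (Nat.le_succ i) h3)
              ≫ mor hn hm N' (up_le hn hm h1 h2 hi)
            from mor_comp hn hm N' _ _]
        rw [Category.assoc, ih hi, ← Category.assoc, sqA_up i (by omega) (by omega),
          Category.assoc]
  -- full naturality over canonical elements
  have natSq : ∀ (x y : ℕ) (hx : x < n + m) (hy : y < n + m) (hbp : bp hn hm x ≤ bp hn hm y),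
      mor hn hm M hbp ≫ A y = A x ≫ mor hn hm N' hbp := by
    intro x y hx hy hbp
    have hbip : bipathLE n x y := by
      have hb : bipathLE n (min x (n+m-1)) (min y (n+m-1)) := hbp
      have h0 : min x (n+m-1) = x := by omega
      have h1 : min y (n+m-1) = y := by omega
      rwa [h0, h1] at hb
    by_cases hxy : x = y
    · subst hxy
      rw [mor_id hn hm M, mor_id hn hm N']
      simp
    · have hcase : (x ≤ y ∧ y ≤ n) ∨ (n ≤ y ∧ y ≤ x ∧ x ≤ n+m-1)
          ∨ (x = 0 ∧ n < y ∧ y ≤ n+m-1) := by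
        unfold bipathLE at hbip
        omega
      rcases hcase with ⟨h1,h2⟩ | ⟨h1,h2,h3⟩ | ⟨h1,h2,h3⟩
      · exact sqA_low_comp x y h1 h2
      · exact sqA_up_comp x y h1 h2 h3
      · subst h1
        rw [show mor hn hm M hbp
            = mor hn hm M (wrap_le hn hm)
              ≫ mor hn hm M (up_le hn hm (by omega) (by omega) le_rfl)
            from mor_comp hn hm M _ _,
          show mor hn hm N' hbp
            = mor hn hm N' (wrap_le hn hm)
              ≫ mor hn hm N' (up_le hn hm (by omega) (by omega) le_rfl)
            from mor_comp hn hm N' _ _]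
        rw [Category.assoc, sqA_up_comp (n+m-1) y (by omega) (by omega) le_rfl,
          ← Category.assoc, sqA_wrap, Category.assoc]
  -- iso-ness of the components
  have hAiso : ∀ j, j ≤ n+m-1 → IsIso (A j) := by
    intro j hj
    rcases Nat.lt_or_ge j n with h | h
    · rw [hAlow j h]
      haveI : IsIso (phi1 hn hm hz M N' Ψ j) := isIso_phi1 hn hm hz M N' Ψ j (by omega)
      haveI : IsIso (dh j) := by
        refine ⟨dhs j, ?_, ?_⟩
        · ext x
          show (d j).symm ((d j) x) = x
          exact (d j).symm_apply_apply x
        · ext x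
          show (d j) ((d j).symm x) = x
          exact (d j).apply_symm_apply x
      infer_instance
    · rw [hAup j (by omega)]
      exact isIso_phi0 hn hm hz M N' Ψ j hj
  -- assemble the natural isomorphism
  have hbpX : ∀ X : Bipath n m, bp hn hm X.1 = X := by
    intro X
    apply Subtype.ext
    show min X.1 (n+m-1) = X.1
    have := X.2
    omega
  refine ⟨NatIso.ofComponents
    (fun X => eqToIso (congrArg M.obj (hbpX X).symm) ≪≫
      (@asIso _ _ _ _ (A X.1) (hAiso X.1 (by have := X.2; omega))) ≪≫
      eqToIso (congrArg N'.obj (hbpX X))) ?_⟩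
  intro X Y f
  simp only [Iso.trans_hom, eqToIso.hom, asIso_hom]
  have hxy : bp hn hm X.1 ≤ bp hn hm Y.1 := by
    rw [hbpX X, hbpX Y]
    exact leOfHom f
  have hf : f = eqToHom (hbpX X).symm ≫ homOfLE hxy ≫ eqToHom (hbpX Y) :=
    Subsingleton.elim _ _
  rw [hf]
  simp only [Functor.map_comp, eqToHom_map, Category.assoc, eqToHom_trans,
    eqToHom_refl, Category.id_comp, eqToHom_trans_assoc, Category.comp_id]
  have hmid := natSq X.1 Y.1 X.2 Y.2 hxy
  have := congrArg (fun g => eqToHom (congrArg M.obj (hbpX X).symm) ≫ g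
      ≫ eqToHom (congrArg N'.obj (hbpX Y))) hmid
  simpa [Category.assoc, mor] using this

end Assemble

/-- Completeness of the zigzag restriction: two bipath modules are isomorphic
if and only if their restrictions along the covering map are isomorphic. -/
theorem restrict_complete_invariant (n m : ℕ) (hn : 1 < n) (hm : 1 < m)
    (k : Type) [Field k] (hz : Monotone (zeta n m hn hm))
    (M N : Bipath n m ⥤ ModuleCat k)
    (hfdM : ∀ p, FiniteDimensional k (M.obj p))
    (hfdN : ∀ p, FiniteDimensional k (N.obj p)) :
    Nonempty (M ≅ N) ↔
      Nonempty ((restrictAlong k hz).obj M ≅ (restrictAlong k hz).obj N) := by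
  constructor
  · rintro ⟨i⟩
    exact ⟨(restrictAlong k hz).mapIso i⟩
  · rintro ⟨Ψ⟩
    exact backward_iso hn hm hz M N Ψ hfdM
end

section
/- Restriction of the left-interval module: for a left interval [i,0]◁ = {z ∈ B : 0 ≤ z ≤ i} (with i ∈ {0,...,n−1}), R(k[i,0]◁) ≅ ⊕_{k∈ℤ} k(kN, kN+i+1)_ZZ, where (a,b)_ZZ = {(c,d) ∈ ZZ : c > a, d < b} and N = n+m−1. -/
open CategoryTheory CategoryTheory.Limits

open CategoryTheory CategoryTheory.Limits
open scoped Classical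

lemma isConvex_lower {P : Type} [Preorder P] (a : P) : IsConvexIn {z : P | z ≤ a} :=
  fun _ _ _ _ hq hpz hzq => le_trans hzq hq

/-!
The preimage `ζ⁻¹[0,i]` is the disjoint union of the translates `(zN, zN+i+1)_ZZ`: for
`(c,d) ∈ ZZ`, `ζ(c,d) ≤ i` says that `d mod N ≤ i`, except at the points `(d,d)` with `N ∣ d`,
which `ζ` sends to the top `n+m-1` of the second chain. Since `i+1 ≤ N`, comparable points of the
preimage lie in the same translate. Restricting an interval module gives the interval module of
the preimage, and an interval module whose support splits into such mutually incomparable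
convex pieces is the coproduct of the pieces' interval modules: pointwise, at most one summand is
nonzero and it maps isomorphically onto the fiber.
-/

lemma IsConvexIn.preimage {P Q : Type} [Preorder P] [Preorder Q] {I : Set Q}
    (hI : IsConvexIn I) {f : P → Q} (hf : Monotone f) : IsConvexIn (f ⁻¹' I) :=
  fun _ _ _ hp hq hpz hzq => hI hp hq (hf hpz) (hf hzq)

noncomputable def isColimitOfIsIsoOfIsZero {C : Type*} [Category C] [HasZeroMorphisms C]
    {ι : Type*} {F : Discrete ι ⥤ C} (c : Cocone F) (j : ι) (hc : IsIso (c.ι.app ⟨j⟩))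
    (hF : ∀ w, w ≠ j → IsZero (F.obj ⟨w⟩)) : IsColimit c where
  desc s := inv (c.ι.app ⟨j⟩) ≫ s.ι.app ⟨j⟩
  fac s := by
    rintro ⟨w⟩
    by_cases hw : w = j
    · subst hw
      simp
    · exact (hF w hw).eq_of_src _ _
  uniq s m hm := by
    rw [← hm ⟨j⟩]
    simp

section IntervalFiber

variable (k : Type) [Field k] {P : Type}

lemma intervalFiber_mono {J I : Set P} (hJI : J ⊆ I) (p : P) :
    intervalFiber k J p ≤ intervalFiber k I p :=
  fun _ hx hpI => hx fun hpJ => hpI (hJI hpJ)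

lemma intervalFiber_eq_top {I : Set P} {p : P} (hp : p ∈ I) : intervalFiber k I p = ⊤ :=
  eq_top_iff.2 fun _ _ hpI => absurd hp hpI

lemma intervalFiber_eq_bot {I : Set P} {p : P} (hp : p ∉ I) : intervalFiber k I p = ⊥ :=
  eq_bot_iff.2 fun _ hx => hx hp

end IntervalFiber

section IntervalModule

variable (k : Type) [Field k] {P : Type} [Preorder P]

noncomputable def restrictAlongObjIntervalModuleIso {Q : Type} [Preorder Q] {f : P → Q}
    (hf : Monotone f) (I : Set Q) (hI : IsConvexIn I) :
    (restrictAlong k hf).obj (intervalModule k I hI) ≅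
      intervalModule k (f ⁻¹' I) (hI.preimage hf) :=
  NatIso.ofComponents (fun _ => Iso.refl _) (fun _ => rfl)

lemma isZero_intervalModule_obj {I : Set P} (hI : IsConvexIn I) {p : P} (hp : p ∉ I) :
    IsZero ((intervalModule k I hI).obj p) := by
  have : Subsingleton (intervalFiber k I p) := by
    rw [intervalFiber_eq_bot k hp]
    infer_instance
  exact ModuleCat.isZero_of_subsingleton (ModuleCat.of k (intervalFiber k I p))

noncomputable def intervalModuleInclusion {J I : Set P} (hJ : IsConvexIn J) (hI : IsConvexIn I)
    (hJI : J ⊆ I) (hup : ∀ ⦃p q⦄, p ∈ J → p ≤ q → q ∈ I → q ∈ J) :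
    intervalModule k J hJ ⟶ intervalModule k I hI where
  app p := ModuleCat.ofHom (Submodule.inclusion (intervalFiber_mono k hJI p))
  naturality p q f := by
    refine ModuleCat.hom_ext (LinearMap.ext fun (x : intervalFiber k J p) => Subtype.ext ?_)
    change (if q ∈ J then (x : k) else 0) = if q ∈ I then (x : k) else 0
    by_cases hqJ : q ∈ J
    · simp [hqJ, hJI hqJ]
    by_cases hqI : q ∈ I
    · simp [hqJ, hqI, x.2 fun hpJ => hqJ (hup hpJ f.le hqI)]
    · simp [hqJ, hqI]

lemma isIso_intervalModuleInclusion_app {J I : Set P} (hJ : IsConvexIn J) (hI : IsConvexIn I)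
    (hJI : J ⊆ I) (hup : ∀ ⦃p q⦄, p ∈ J → p ≤ q → q ∈ I → q ∈ J) {p : P} (hp : p ∈ J) :
    IsIso ((intervalModuleInclusion k hJ hI hJI hup).app p) :=
  ⟨ModuleCat.ofHom (Submodule.inclusion (intervalFiber_eq_top k hp ▸ le_top)),
    by ext; rfl, by ext; rfl⟩

end IntervalModule

section Decomposition

variable (k : Type) [Field k] {P : Type} [Preorder P] {ι : Type} {I : Set P} {J : ι → Set P}

lemma mem_of_le_of_mem_piece (hIJ : I = ⋃ z, J z)
    (hsep : ∀ ⦃z w p q⦄, p ∈ J z → q ∈ J w → p ≤ q → z = w)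
    {z : ι} {p q : P} (hp : p ∈ J z) (hpq : p ≤ q) (hq : q ∈ I) : q ∈ J z := by
  obtain ⟨w, hqw⟩ := Set.mem_iUnion.1 (hIJ ▸ hq)
  rwa [hsep hp hqw hpq]

variable (hI : IsConvexIn I) (hJ : ∀ z, IsConvexIn (J z)) (hIJ : I = ⋃ z, J z)
  (hsep : ∀ ⦃z w p q⦄, p ∈ J z → q ∈ J w → p ≤ q → z = w)

noncomputable def intervalModuleCofan : Cofan fun z => intervalModule k (J z) (hJ z) :=
  Cofan.mk (intervalModule k I hI) fun z =>
    intervalModuleInclusion k (hJ z) hI (hIJ ▸ Set.subset_iUnion J z)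
      fun _ _ => mem_of_le_of_mem_piece hIJ hsep

noncomputable def isColimitIntervalModuleCofan :
    IsColimit (intervalModuleCofan k hI hJ hIJ hsep) :=
  evaluationJointlyReflectsColimits _ fun p => by
    by_cases h : ∃ z, p ∈ J z
    · refine isColimitOfIsIsoOfIsZero _ h.choose
        (isIso_intervalModuleInclusion_app k (hJ _) hI (hIJ ▸ Set.subset_iUnion J _)
          (fun _ _ => mem_of_le_of_mem_piece hIJ hsep) h.choose_spec) fun w hw => ?_
      exact isZero_intervalModule_obj k (hJ w) fun hpw => hw (hsep hpw h.choose_spec le_rfl)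
    · refine IsColimit.ofIsZero _ (Functor.isZero _ fun ⟨w⟩ => ?_) ?_
      · exact isZero_intervalModule_obj k (hJ w) fun hpw => h ⟨w, hpw⟩
      · exact isZero_intervalModule_obj k hI (by simpa [hIJ] using h)

noncomputable def intervalModuleIsoSigma :
    intervalModule k I hI ≅ ∐ fun z => intervalModule k (J z) (hJ z) :=
  (isColimitIntervalModuleCofan k hI hJ hIJ hsep).coconePointUniqueUpToIso (colimit.isColimit _)

end Decomposition

lemma ZZ.a_eq_or (p : ZZ) : p.a = p.b ∨ p.a = p.b + 1 := p.2

lemma mem_zzIoo {a b : ℤ} {p : ZZ} : p ∈ zzIoo a b ↔ a < p.a ∧ p.b < b := Iff.rfl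

lemma eq_of_mem_zzIoo_of_le {N L : ℤ} (hLN : L ≤ N) {z w : ℤ} {p q : ZZ}
    (hp : p ∈ zzIoo (z * N) (z * N + L)) (hq : q ∈ zzIoo (w * N) (w * N + L)) (hpq : p ≤ q) :
    z = w := by
  rw [mem_zzIoo] at hp hq
  obtain ⟨hqa, hpb⟩ := ZZ.le_iff.1 hpq
  have hab := ZZ.a_eq_or p
  have hN : 0 < N := by rcases hab with h | h <;> omega
  have hwz : w * N < (z + 1) * N := by rw [add_one_mul]; rcases hab with h | h <;> omega
  have hzw : z * N < (w + 1) * N := by rw [add_one_mul]; rcases hab with h | h <;> omega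
  have := lt_of_mul_lt_mul_right hwz hN.le
  have := lt_of_mul_lt_mul_right hzw hN.le
  omega

lemma exists_mem_zzIoo_iff_emod {N L : ℤ} (hLN : L ≤ N) (p : ZZ) :
    (∃ z, p ∈ zzIoo (z * N) (z * N + L)) ↔ p.b - p.b % N < p.a ∧ p.b % N < L := by
  simp only [mem_zzIoo]
  constructor
  · rintro ⟨z, hza, hzb⟩
    have hab := ZZ.a_eq_or p
    have hN : 0 < N := by rcases hab with h | h <;> omega
    have hmod : p.b / N = z ∧ p.b % N = p.b - z * N :=
      (Int.ediv_emod_unique hN).2 ⟨by ring, by rcases hab with h | h <;> omega, by omega⟩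
    omega
  · rintro ⟨ha, hb⟩
    refine ⟨p.b / N, ?_, ?_⟩ <;> rw [Int.emod_def] at ha hb <;> linarith [mul_comm N (p.b / N)]

lemma Bipath.le_iff_val_le {n m : ℕ} {x y : Bipath n m} (hy : y.1 < n) : x ≤ y ↔ x.1 ≤ y.1 := by
  change bipathLE n x.1 y.1 ↔ _
  unfold bipathLE
  omega

lemma zeta_le_iff_exists_mem_zzIoo (n m : ℕ) (hn : 1 < n) (hm : 1 < m) {i : Bipath n m}
    (hi : i.1 ≤ n - 1) (p : ZZ) :
    zeta n m hn hm p ≤ i ↔ ∃ z, p ∈ zzIoo (z * ((n:ℤ)+m-1)) (z * ((n:ℤ)+m-1) + i.1 + 1) := by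
  simp_rw [add_assoc]
  rw [exists_mem_zzIoo_iff_emod (by omega), Bipath.le_iff_val_le (by omega)]
  have hN : (0 : ℤ) < (n : ℤ) + m - 1 := by omega
  have := Int.emod_nonneg p.b hN.ne'
  have := Int.emod_lt_of_pos p.b hN
  have := ZZ.a_eq_or p
  change zetaFun n m p.a p.b ≤ i.1 ↔ _
  unfold zetaFun
  split_ifs <;> omega

/-- Restriction of the left-interval module `k[i,0]◁` along the covering map
decomposes as `⊕_(k ∈ ℤ) k(kN, kN+i+1)_ZZ`. -/
theorem restrict_left_interval_j_zero (n m : ℕ) (hn : 1 < n) (hm : 1 < m)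
    (k : Type) [Field k] (hz : Monotone (zeta n m hn hm))
    (i : Bipath n m) (hi : i.1 ≤ n - 1) :
    Nonempty ((restrictAlong k hz).obj
        (intervalModule k {z | z ≤ i} (isConvex_lower i)) ≅
      ∐ fun z : ℤ =>
        intervalModule k (zzIoo (z * ((n:ℤ)+m-1)) (z * ((n:ℤ)+m-1) + i.1 + 1)) (zzIoo_convex _ _)) := by
  have hpreimage : zeta n m hn hm ⁻¹' {z | z ≤ i} =
      ⋃ z : ℤ, zzIoo (z * ((n:ℤ)+m-1)) (z * ((n:ℤ)+m-1) + i.1 + 1) :=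
    Set.ext fun p => (zeta_le_iff_exists_mem_zzIoo n m hn hm hi p).trans Set.mem_iUnion.symm
  have hsep : ∀ ⦃z w : ℤ⦄ ⦃p q : ZZ⦄, p ∈ zzIoo (z * ((n:ℤ)+m-1)) (z * ((n:ℤ)+m-1) + i.1 + 1) →
      q ∈ zzIoo (w * ((n:ℤ)+m-1)) (w * ((n:ℤ)+m-1) + i.1 + 1) → p ≤ q → z = w := by
    intro z w p q hp hq
    rw [add_assoc] at hp hq
    exact eq_of_mem_zzIoo_of_le (by omega) hp hq
  exact ⟨restrictAlongObjIntervalModuleIso k hz _ _ ≪≫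
    intervalModuleIsoSigma k _ (fun _ => zzIoo_convex _ _) hpreimage hsep⟩
end

section
/- Finite-slice multiplicity formula for the full interval: for any bipath module M, the multiplicity of the full interval B in the arc code of M equals the multiplicity of the full interval ZZ| in the barcode of the finite zigzag module R|(M). -/
open CategoryTheory CategoryTheory.Limits

open CategoryTheory CategoryTheory.Limits
open scoped Classical

/-- The finite slice `ZZ| = (-m+1, n+m)_ZZ` of the zigzag poset. -/
def Slice (n m : ℕ) : Type := {p : ZZ // p ∈ zzIoo (-(m:ℤ) + 1) ((n:ℤ) + m)}

noncomputable instance (n m : ℕ) : PartialOrder (Slice n m) := Subtype.partialOrder _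

lemma slice_val_mono (n m : ℕ) : Monotone (fun p : Slice n m => p.1) :=
  fun _ _ h => h

lemma Slice.le_iff {n m : ℕ} {p q : Slice n m} :
    p ≤ q ↔ q.1.a ≤ p.1.a ∧ p.1.b ≤ q.1.b := Iff.rfl

/-- The interval `[a,b)` of the finite slice. -/
def sliceIco (n m : ℕ) (a b : ℤ) : Set (Slice n m) := {p | a ≤ p.1.b ∧ p.1.b < b}
/-- The interval `(a,b)` of the finite slice. -/
def sliceIoo (n m : ℕ) (a b : ℤ) : Set (Slice n m) := {p | a < p.1.a ∧ p.1.b < b}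
/-- The interval `[a,b]` of the finite slice. -/
def sliceIcc (n m : ℕ) (a b : ℤ) : Set (Slice n m) := {p | p.1.a ≤ b ∧ a ≤ p.1.b}
/-- The interval `(a,b]` of the finite slice. -/
def sliceIoc (n m : ℕ) (a b : ℤ) : Set (Slice n m) := {p | a < p.1.a ∧ p.1.a ≤ b}

lemma sliceIco_convex (n m : ℕ) (a b : ℤ) : IsConvexIn (sliceIco n m a b) := by
  intro p z q hp hq hpz hzq
  exact ⟨le_trans hp.1 (Slice.le_iff.1 hpz).2, lt_of_le_of_lt (Slice.le_iff.1 hzq).2 hq.2⟩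

lemma sliceIoo_convex (n m : ℕ) (a b : ℤ) : IsConvexIn (sliceIoo n m a b) := by
  intro p z q hp hq hpz hzq
  exact ⟨lt_of_lt_of_le hq.1 (Slice.le_iff.1 hzq).1, lt_of_le_of_lt (Slice.le_iff.1 hzq).2 hq.2⟩

section Chi
variable (k : Type) [Field k] {P : Type} [Preorder P]

/-- Sections of a persistence module. -/
def Sec (N : P ⥤ ModuleCat k) : Submodule k (∀ p, N.obj p) where
  carrier := {x | ∀ p q (h : p ≤ q), N.map (homOfLE h) (x p) = x q}
  add_mem' := by intro a b ha hb p q h; simp [map_add, ha p q h, hb p q h]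
  zero_mem' := by intro p q h; simp
  smul_mem' := by intro c a ha p q h; simp [map_smul, ha p q h]

/-- Cosections of a persistence module. -/
def CoSec (N : P ⥤ ModuleCat k) : Submodule k (∀ p, Module.Dual k (N.obj p)) where
  carrier := {φ | ∀ p q (h : p ≤ q), (φ q).comp (N.map (homOfLE h)).hom = φ p}
  add_mem' := by
    intro a b ha hb p q h
    ext v; simp only [LinearMap.add_comp, LinearMap.add_apply, ha p q h, hb p q h,
      Pi.add_apply]
  zero_mem' := by intro p q h; ext v; simp
  smul_mem' := by
    intro c a ha p q h
    ext v
    simp only [LinearMap.smul_comp, LinearMap.smul_apply, ha p q h, Pi.smul_apply]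

/-- The canonical pairing between sections and cosections, evaluated at `p0`. -/
def pairMap (p0 : P) (N : P ⥤ ModuleCat k) :
    Sec k N →ₗ[k] (CoSec k N →ₗ[k] k) where
  toFun x :=
    { toFun := fun φ => φ.1 p0 (x.1 p0)
      map_add' := by intro a b; simp
      map_smul' := by intro c a; simp }
  map_add' := by intro a b; ext φ; simp
  map_smul' := by intro c a; ext φ; simp

/-- The full-interval multiplicity invariant. -/
noncomputable def chi (p0 : P) (N : P ⥤ ModuleCat k) : ℕ :=
  Module.finrank k (LinearMap.range (pairMap k p0 N))

lemma pair_value_indep (N : P ⥤ ModuleCat k) (x : Sec k N) (φ : CoSec k N) {p q : P}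
    (h : Relation.ReflTransGen (fun a b : P => a ≤ b ∨ b ≤ a) p q) :
    φ.1 p (x.1 p) = φ.1 q (x.1 q) := by
  induction h with
  | refl => rfl
  | tail hrel hstep ih =>
    rename_i b c
    rcases hstep with h | h
    · rw [ih, ← x.2 b c h, ← φ.2 b c h]; rfl
    · rw [ih, ← x.2 c b h, ← φ.2 c b h]; rfl

variable {k}

/-- Transport of sections along an isomorphism. -/
def secEquiv {N N' : P ⥤ ModuleCat k} (e : N ≅ N') : Sec k N ≃ₗ[k] Sec k N' where
  toFun x := ⟨fun p => e.hom.app p (x.1 p), by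
    intro p q h
    have hn := e.hom.naturality (homOfLE h)
    have hv : e.hom.app q (N.map (homOfLE h) (x.1 p)) =
        N'.map (homOfLE h) (e.hom.app p (x.1 p)) :=
      congrArg (fun (f : N.obj p ⟶ N'.obj q) => f (x.1 p)) hn
    dsimp only
    rw [← hv, x.2 p q h]⟩
  invFun x := ⟨fun p => e.inv.app p (x.1 p), by
    intro p q h
    have hn := e.inv.naturality (homOfLE h)
    have hv : e.inv.app q (N'.map (homOfLE h) (x.1 p)) =
        N.map (homOfLE h) (e.inv.app p (x.1 p)) :=
      congrArg (fun (f : N'.obj p ⟶ N.obj q) => f (x.1 p)) hn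
    dsimp only
    rw [← hv, x.2 p q h]⟩
  left_inv x := by
    apply Subtype.ext; funext p
    dsimp only
    exact congrArg (fun (f : N.obj p ⟶ N.obj p) => f (x.1 p)) (e.hom_inv_id_app p)
  right_inv x := by
    apply Subtype.ext; funext p
    dsimp only
    exact congrArg (fun (f : N'.obj p ⟶ N'.obj p) => f (x.1 p)) (e.inv_hom_id_app p)
  map_add' x y := by apply Subtype.ext; funext p; simp
  map_smul' c x := by apply Subtype.ext; funext p; simp

/-- Transport of cosections along an isomorphism (contravariant). -/
def cosecEquiv {N N' : P ⥤ ModuleCat k} (e : N ≅ N') : CoSec k N' ≃ₗ[k] CoSec k N where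
  toFun φ := ⟨fun p => (φ.1 p).comp (e.hom.app p).hom, by
    intro p q h
    ext v
    have hn := e.hom.naturality (homOfLE h)
    have hv : e.hom.app q (N.map (homOfLE h) v) = N'.map (homOfLE h) (e.hom.app p v) :=
      congrArg (fun (f : N.obj p ⟶ N'.obj q) => f v) hn
    show φ.1 q (e.hom.app q (N.map (homOfLE h) v)) = φ.1 p (e.hom.app p v)
    rw [hv]
    exact congrArg (fun (f : Module.Dual k (N'.obj p)) => f (e.hom.app p v)) (φ.2 p q h)⟩
  invFun φ := ⟨fun p => (φ.1 p).comp (e.inv.app p).hom, by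
    intro p q h
    ext v
    have hn := e.inv.naturality (homOfLE h)
    have hv : e.inv.app q (N'.map (homOfLE h) v) = N.map (homOfLE h) (e.inv.app p v) :=
      congrArg (fun (f : N'.obj p ⟶ N.obj q) => f v) hn
    show φ.1 q (e.inv.app q (N'.map (homOfLE h) v)) = φ.1 p (e.inv.app p v)
    rw [hv]
    exact congrArg (fun (f : Module.Dual k (N.obj p)) => f (e.inv.app p v)) (φ.2 p q h)⟩
  left_inv φ := by
    apply Subtype.ext; funext p; ext v
    have h2 := congrArg (fun (f : N'.obj p ⟶ N'.obj p) => f v) (e.inv_hom_id_app p)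
    exact congrArg (φ.1 p) h2
  right_inv φ := by
    apply Subtype.ext; funext p; ext v
    have h2 := congrArg (fun (f : N.obj p ⟶ N.obj p) => f v) (e.hom_inv_id_app p)
    exact congrArg (φ.1 p) h2
  map_add' x y := by apply Subtype.ext; funext p; ext v; simp
  map_smul' c x := by apply Subtype.ext; funext p; ext v; simp

variable (k)

lemma chi_iso (p0 : P) {N N' : P ⥤ ModuleCat k} (e : N ≅ N') :
    chi k p0 N = chi k p0 N' := by
  have key : pairMap k p0 N' =
      (((cosecEquiv e).dualMap : Module.Dual k (CoSec k N) ≃ₗ[k]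
          Module.Dual k (CoSec k N')).toLinearMap.comp
        ((pairMap k p0 N).comp ((secEquiv e).symm : Sec k N' ≃ₗ[k] Sec k N).toLinearMap)) := by
    ext x φ
    show (φ.1 p0) (x.1 p0) =
      (pairMap k p0 N ((secEquiv e).symm x)) ((cosecEquiv e) φ)
    show (φ.1 p0) (x.1 p0) = ((cosecEquiv e) φ).1 p0 (((secEquiv e).symm x).1 p0)
    show (φ.1 p0) (x.1 p0) = (φ.1 p0) (e.hom.app p0 (e.inv.app p0 (x.1 p0)))
    congr 1
    exact (congrArg (fun (f : N'.obj p0 ⟶ N'.obj p0) => f (x.1 p0)) (e.inv_hom_id_app p0)).symm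
  unfold chi
  rw [key, LinearMap.range_comp, LinearMap.range_comp,
    LinearEquiv.range, Submodule.map_top, LinearEquiv.finrank_map_eq]

end Chi
open scoped DirectSum

section DS
variable (k : Type) [Field k] {P Q : Type} [Preorder P] [Preorder Q]

lemma intervalMap_self (I : Set Q) (p : Q) :
    intervalMap k I p p = LinearMap.id := by
  ext x
  show (if p ∈ I then (x : k) else 0) = (x : k)
  by_cases hp : p ∈ I
  · simp [hp]
  · simp [hp, x.2 hp]

lemma intervalMap_comp {I : Set Q} (hI : IsConvexIn I) {p q r : Q}
    (hpq : p ≤ q) (hqr : q ≤ r) :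
    (intervalMap k I q r).comp (intervalMap k I p q) = intervalMap k I p r := by
  ext x
  show (if r ∈ I then (if q ∈ I then (x : k) else 0) else 0) = (if r ∈ I then (x : k) else 0)
  by_cases hr : r ∈ I
  · by_cases hq : q ∈ I
    · simp [hr, hq]
    · have hp : p ∉ I := fun hp => hq (hI hp hr hpq hqr)
      simp [hr, hq, x.2 hp]
  · simp [hr]

variable {ι : Type}

/-- The building block of the concrete direct sum of interval modules. -/
noncomputable def dsMap (u : P → Q) (J : ι → Set Q) (p q : P) :
    (⨁ x, intervalFiber k (J x) (u p)) →ₗ[k] (⨁ x, intervalFiber k (J x) (u q)) :=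
  DirectSum.toModule k ι _ fun x =>
    (DirectSum.lof k ι (fun y => intervalFiber k (J y) (u q)) x).comp
      (intervalMap k (J x) (u p) (u q))

lemma dsMap_lof (u : P → Q) (J : ι → Set Q) (p q : P)
    (x : ι) (v : intervalFiber k (J x) (u p)) :
    dsMap k u J p q (DirectSum.lof k ι (fun y => intervalFiber k (J y) (u p)) x v) =
      DirectSum.lof k ι (fun y => intervalFiber k (J y) (u q)) x
        (intervalMap k (J x) (u p) (u q) v) := by
  unfold dsMap
  rw [DirectSum.toModule_lof]
  rfl

lemma dsMap_id (u : P → Q) (J : ι → Set Q) (p : P) :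
    dsMap k u J p p = LinearMap.id := by
  apply DirectSum.linearMap_ext
  intro x
  ext v
  simp only [LinearMap.comp_apply, LinearMap.id_apply]
  rw [dsMap_lof, intervalMap_self]
  rfl

lemma dsMap_trans {u : P → Q} (J : ι → Set Q) (hJ : ∀ x, IsConvexIn (J x))
    {p q r : P} (hpq : u p ≤ u q) (hqr : u q ≤ u r) :
    (dsMap k u J q r).comp (dsMap k u J p q) = dsMap k u J p r := by
  apply DirectSum.linearMap_ext
  intro x
  ext v
  simp only [LinearMap.comp_apply]
  rw [dsMap_lof, dsMap_lof, dsMap_lof, ← intervalMap_comp k (hJ x) hpq hqr]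
  rfl

lemma dsMap_component (u : P → Q) (J : ι → Set Q) (p q : P) (x : ι)
    (y : ⨁ z, intervalFiber k (J z) (u p)) :
    DirectSum.component k ι (fun z => intervalFiber k (J z) (u q)) x (dsMap k u J p q y) =
      intervalMap k (J x) (u p) (u q)
        (DirectSum.component k ι (fun z => intervalFiber k (J z) (u p)) x y) := by
  have key : (DirectSum.component k ι (fun z => intervalFiber k (J z) (u q)) x).comp
        (dsMap k u J p q) =
      (intervalMap k (J x) (u p) (u q)).comp
        (DirectSum.component k ι (fun z => intervalFiber k (J z) (u p)) x) := by
    apply DirectSum.linearMap_ext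
    intro z
    ext v
    simp only [LinearMap.comp_apply]
    rw [dsMap_lof, DirectSum.component.of, DirectSum.component.of]
    by_cases hz : z = x
    · subst hz; simp
    · simp [hz]
  simpa only [LinearMap.comp_apply] using LinearMap.congr_fun key y

/-- The concrete direct sum of interval modules, reindexed along `u`. -/
noncomputable def DS {u : P → Q} (hu : Monotone u) (J : ι → Set Q)
    (hJ : ∀ x, IsConvexIn (J x)) : P ⥤ ModuleCat.{0} k where
  obj p := ModuleCat.of k (⨁ x, intervalFiber k (J x) (u p))
  map {p q} _ := ModuleCat.ofHom (dsMap k u J p q)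
  map_id p := ModuleCat.hom_ext (dsMap_id k u J p)
  map_comp {p q r} f g := ModuleCat.hom_ext (dsMap_trans k J hJ (hu (leOfHom f)) (hu (leOfHom g))).symm

lemma DS_map_eq {u : P → Q} (hu : Monotone u) (J : ι → Set Q)
    (hJ : ∀ x, IsConvexIn (J x)) {p q : P} (h : p ⟶ q) :
    (DS k hu J hJ).map h = ModuleCat.ofHom (dsMap k u J p q) := rfl

lemma intervalModule_map_eq (I : Set Q) (hI : IsConvexIn I) {p q : Q} (h : p ⟶ q) :
    (intervalModule k I hI).map h = ModuleCat.ofHom (intervalMap k I p q) := rfl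

/-- The unindexed variant. -/
noncomputable def dsMapId (J : ι → Set Q) (p q : Q) :
    (⨁ x, intervalFiber k (J x) p) →ₗ[k] (⨁ x, intervalFiber k (J x) q) :=
  DirectSum.toModule k ι _ fun x =>
    (DirectSum.lof k ι (fun y => intervalFiber k (J y) q) x).comp
      (intervalMap k (J x) p q)

lemma dsMapId_lof (J : ι → Set Q) (p q : Q)
    (x : ι) (v : intervalFiber k (J x) p) :
    dsMapId k J p q (DirectSum.lof k ι (fun y => intervalFiber k (J y) p) x v) =
      DirectSum.lof k ι (fun y => intervalFiber k (J y) q) x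
        (intervalMap k (J x) p q v) := by
  unfold dsMapId
  rw [DirectSum.toModule_lof]
  rfl

lemma dsMapId_idlaw (J : ι → Set Q) (p : Q) :
    dsMapId k J p p = LinearMap.id := by
  apply DirectSum.linearMap_ext
  intro x
  ext v
  simp only [LinearMap.comp_apply, LinearMap.id_apply]
  rw [dsMapId_lof, intervalMap_self]
  rfl

lemma dsMapId_trans (J : ι → Set Q) (hJ : ∀ x, IsConvexIn (J x))
    {p q r : Q} (hpq : p ≤ q) (hqr : q ≤ r) :
    (dsMapId k J q r).comp (dsMapId k J p q) = dsMapId k J p r := by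
  apply DirectSum.linearMap_ext
  intro x
  ext v
  simp only [LinearMap.comp_apply]
  rw [dsMapId_lof, dsMapId_lof, dsMapId_lof, ← intervalMap_comp k (hJ x) hpq hqr]
  rfl

/-- The concrete direct sum of interval modules. -/
noncomputable def DSid (J : ι → Set Q) (hJ : ∀ x, IsConvexIn (J x)) :
    Q ⥤ ModuleCat.{0} k where
  obj p := ModuleCat.of k (⨁ x, intervalFiber k (J x) p)
  map {p q} _ := ModuleCat.ofHom (dsMapId k J p q)
  map_id p := ModuleCat.hom_ext (dsMapId_idlaw k J p)
  map_comp {p q r} f g := ModuleCat.hom_ext (dsMapId_trans k J hJ (leOfHom f) (leOfHom g)).symm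

lemma DSid_map_eq (J : ι → Set Q) (hJ : ∀ x, IsConvexIn (J x)) {p q : Q} (h : p ⟶ q) :
    (DSid k J hJ).map h = ModuleCat.ofHom (dsMapId k J p q) := rfl

/-- `DSid` agrees with `DS` along the identity. -/
noncomputable def idIsoDS (J : ι → Set Q) (hJ : ∀ x, IsConvexIn (J x)) :
    DSid k J hJ ≅ DS k (monotone_id (α := Q)) J hJ :=
  NatIso.ofComponents (fun p => Iso.refl _) (by
    intro p q h
    rw [Iso.refl_hom, Iso.refl_hom]
    exact (Category.comp_id _).trans (Category.id_comp _).symm)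

/-- The inclusion of a summand into the concrete direct sum. -/
noncomputable def lofNat (J : ι → Set Q) (hJ : ∀ x, IsConvexIn (J x)) (x : ι) :
    intervalModule k (J x) (hJ x) ⟶ DSid k J hJ where
  app p := ModuleCat.ofHom (DirectSum.lof k ι (fun y => intervalFiber k (J y) p) x)
  naturality {p q} h := by
    ext v
    show DirectSum.lof k ι (fun y => intervalFiber k (J y) q) x
        ((intervalModule k (J x) (hJ x)).map h v) =
      (DSid k J hJ).map h
        (DirectSum.lof k ι (fun y => intervalFiber k (J y) p) x v)
    erw [DSid_map_eq, dsMapId_lof, intervalModule_map_eq]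
    rfl

set_option maxHeartbeats 2000000 in
noncomputable def dsInv (J : ι → Set Q) (hJ : ∀ x, IsConvexIn (J x)) :
    DSid k J hJ ⟶ (∐ fun x : ι => intervalModule k (J x) (hJ x)) where
  app p := ModuleCat.ofHom (DirectSum.toModule k ι _ fun x =>
    (((Sigma.ι (fun x : ι => intervalModule k (J x) (hJ x)) x).app p).hom :
      intervalFiber k (J x) p →ₗ[k]
        ((∐ fun x : ι => intervalModule k (J x) (hJ x)).obj p)))
  naturality {p q} h := by
    apply ModuleCat.hom_ext
    apply DirectSum.linearMap_ext
    intro x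
    ext v
    show DirectSum.toModule k ι _ (fun x => (((Sigma.ι (fun x : ι => intervalModule k (J x) (hJ x)) x).app q).hom :
          intervalFiber k (J x) q →ₗ[k] ((∐ fun x : ι => intervalModule k (J x) (hJ x)).obj q)))
        (dsMapId k J p q (DirectSum.lof k ι (fun y => intervalFiber k (J y) p) x v)) =
      ((∐ fun x : ι => intervalModule k (J x) (hJ x)).map h)
        (DirectSum.toModule k ι _ (fun x => (((Sigma.ι (fun x : ι => intervalModule k (J x) (hJ x)) x).app p).hom :
          intervalFiber k (J x) p →ₗ[k] ((∐ fun x : ι => intervalModule k (J x) (hJ x)).obj p)))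
          (DirectSum.lof k ι (fun y => intervalFiber k (J y) p) x v))
    erw [dsMapId_lof, DirectSum.toModule_lof, DirectSum.toModule_lof]
    have hnat := (Sigma.ι (fun x : ι => intervalModule k (J x) (hJ x)) x).naturality h
    exact congrArg (fun (f : (intervalModule k (J x) (hJ x)).obj p ⟶
        (∐ fun x : ι => intervalModule k (J x) (hJ x)).obj q) => f v) hnat

/-- The coproduct of interval modules is isomorphic to the concrete direct sum. -/
noncomputable def sigmaIsoDS (J : ι → Set Q) (hJ : ∀ x, IsConvexIn (J x)) :
    (∐ fun x : ι => intervalModule k (J x) (hJ x)) ≅ DSid k J hJ where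
  hom := Sigma.desc (lofNat k J hJ)
  inv := dsInv k J hJ
  hom_inv_id := by
    apply colimit.hom_ext
    intro j
    obtain ⟨x⟩ := j
    rw [Category.comp_id, ← Category.assoc]
    have hdesc : Sigma.ι (fun x : ι => intervalModule k (J x) (hJ x)) x ≫
        Sigma.desc (lofNat k J hJ) = lofNat k J hJ x := colimit.ι_desc _ _
    rw [hdesc]
    ext p v
    show (dsInv k J hJ).app p
        (DirectSum.lof k ι (fun y => intervalFiber k (J y) p) x v) = _
    show DirectSum.toModule k ι _ _
        (DirectSum.lof k ι (fun y => intervalFiber k (J y) p) x v) = _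
    erw [DirectSum.toModule_lof]
    rfl
  inv_hom_id := by
    apply NatTrans.ext
    funext p
    simp only [NatTrans.comp_app, NatTrans.id_app]
    apply ModuleCat.hom_ext
    simp only [ModuleCat.hom_comp, ModuleCat.hom_id]
    apply DirectSum.linearMap_ext
    intro x
    ext v
    show (Sigma.desc (lofNat k J hJ)).app p ((dsInv k J hJ).app p
        (DirectSum.lof k ι (fun y => intervalFiber k (J y) p) x v)) =
      DirectSum.lof k ι (fun y => intervalFiber k (J y) p) x v
    have h1 : (dsInv k J hJ).app p
        (DirectSum.lof k ι (fun y => intervalFiber k (J y) p) x v) =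
        (Sigma.ι (fun x : ι => intervalModule k (J x) (hJ x)) x).app p v := by
      show DirectSum.toModule k ι _ _
          (DirectSum.lof k ι (fun y => intervalFiber k (J y) p) x v) = _
      erw [DirectSum.toModule_lof]
      rfl
    rw [h1]
    have hdesc : Sigma.ι (fun x : ι => intervalModule k (J x) (hJ x)) x ≫
        Sigma.desc (lofNat k J hJ) = lofNat k J hJ x := colimit.ι_desc _ _
    exact congrArg (fun (f : intervalModule k (J x) (hJ x) ⟶
      DSid k J hJ) => f.app p v) hdesc

end DS
section ChiDS
variable (k : Type) [Field k] {P Q : Type} [Preorder P] [Preorder Q]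
variable {ι : Type} {u : P → Q}

lemma full_mem {J : ι → Set Q} {x : ι} (hx : u ⁻¹' (J x) = Set.univ) (p : P) :
    u p ∈ J x :=
  (Set.eq_univ_iff_forall.mp hx p : p ∈ u ⁻¹' (J x))

/-- The canonical section supported on a full summand. -/
noncomputable def fullSec (hu : Monotone u) (J : ι → Set Q) (hJ : ∀ x, IsConvexIn (J x))
    (s : {x : ι // u ⁻¹' (J x) = Set.univ}) : Sec k (DS k hu J hJ) :=
  ⟨fun p => DirectSum.lof k ι (fun y => intervalFiber k (J y) (u p)) s.1
      ⟨1, fun hc => absurd (full_mem s.2 p) hc⟩, by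
    intro p q h
    rw [DS_map_eq]
    erw [dsMap_lof]
    congr 1
    apply Subtype.ext
    show (if u q ∈ J s.1 then (1 : k) else 0) = 1
    rw [if_pos (full_mem s.2 q)]⟩

/-- The canonical cosection supported on a full summand. -/
noncomputable def fullCosec (hu : Monotone u) (J : ι → Set Q) (hJ : ∀ x, IsConvexIn (J x))
    (s : {x : ι // u ⁻¹' (J x) = Set.univ}) : CoSec k (DS k hu J hJ) :=
  ⟨fun p => ((intervalFiber k (J s.1) (u p)).subtype).comp
      (DirectSum.component k ι (fun y => intervalFiber k (J y) (u p)) s.1), by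
    intro p q h
    ext v
    simp only [LinearMap.comp_apply]
    rw [DS_map_eq]
    show ((intervalFiber k (J s.1) (u q)).subtype)
      (DirectSum.component k ι (fun y => intervalFiber k (J y) (u q)) s.1 (dsMap k u J p q v)) = _
    erw [dsMap_component]
    show (if u q ∈ J s.1 then
        ((DirectSum.component k ι (fun y => intervalFiber k (J y) (u p)) s.1 v : k)) else 0) = _
    rw [if_pos (full_mem s.2 q)]
    rfl⟩

lemma pair_fullSec_fullCosec (hu : Monotone u) (J : ι → Set Q) (hJ : ∀ x, IsConvexIn (J x))
    (p0 : P) (s t : {x : ι // u ⁻¹' (J x) = Set.univ}) :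
    pairMap k p0 (DS k hu J hJ) (fullSec k hu J hJ s) (fullCosec k hu J hJ t) =
      if s = t then 1 else 0 := by
  show ((intervalFiber k (J t.1) (u p0)).subtype)
      (DirectSum.component k ι (fun y => intervalFiber k (J y) (u p0)) t.1
        (DirectSum.lof k ι (fun y => intervalFiber k (J y) (u p0)) s.1 _)) = _
  by_cases hst : s = t
  · subst hst
    rw [DirectSum.component.lof_self, if_pos rfl]
    rfl
  · have h1 : s.1 ≠ t.1 := fun hh => hst (Subtype.ext hh)
    rw [DirectSum.component.of, dif_neg h1, if_neg hst]
    rfl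

lemma li_fullSec (hu : Monotone u) (J : ι → Set Q) (hJ : ∀ x, IsConvexIn (J x)) (p0 : P) :
    LinearIndependent k
      (fun s : {x : ι // u ⁻¹' (J x) = Set.univ} =>
        pairMap k p0 (DS k hu J hJ) (fullSec k hu J hJ s)) := by
  rw [linearIndependent_iff']
  intro t c hsum s hs
  have := congrArg (fun L : (CoSec k (DS k hu J hJ) →ₗ[k] k) =>
    L (fullCosec k hu J hJ s)) hsum
  simp only [LinearMap.sum_apply, LinearMap.smul_apply, LinearMap.zero_apply,
    pair_fullSec_fullCosec, smul_eq_mul, mul_ite, mul_one, mul_zero] at this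
  rw [Finset.sum_ite_eq' t s c] at this
  rw [if_pos hs] at this
  exact this

lemma pair_mem_span (hu : Monotone u) (J : ι → Set Q) (hJ : ∀ x, IsConvexIn (J x)) (p0 : P)
    (hconn : ∀ p q : P, Relation.ReflTransGen (fun a b : P => a ≤ b ∨ b ≤ a) p q)
    (X : Sec k (DS k hu J hJ)) :
    pairMap k p0 (DS k hu J hJ) X ∈ Submodule.span k
      (Set.range fun s : {x : ι // u ⁻¹' (J x) = Set.univ} =>
        pairMap k p0 (DS k hu J hJ) (fullSec k hu J hJ s)) := by
  classical
  set F : ι → (CoSec k (DS k hu J hJ) →ₗ[k] k) := fun x =>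
    if h : u ⁻¹' (J x) = Set.univ then
      ((DirectSum.component k ι (fun y => intervalFiber k (J y) (u p0)) x
          (X.1 p0) : intervalFiber k (J x) (u p0)) : k) •
        pairMap k p0 (DS k hu J hJ) (fullSec k hu J hJ ⟨x, h⟩)
    else 0 with hF
  have hrepr : pairMap k p0 (DS k hu J hJ) X =
      ∑ x ∈ DFinsupp.support (β := fun y => ↥(intervalFiber k (J y) (u p0))) (X.1 p0),
        F x := by
    ext φ
    have hsum := (DirectSum.sum_support_of
      (β := fun y => ↥(intervalFiber k (J y) (u p0))) (X.1 p0)).symm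
    show φ.1 p0 (X.1 p0) = _
    conv_lhs => rw [hsum]
    erw [map_sum, LinearMap.sum_apply]
    refine Finset.sum_congr rfl ?_
    intro x hx
    by_cases h : u ⁻¹' (J x) = Set.univ
    · rw [hF]
      simp only [dif_pos h, LinearMap.smul_apply]
      have hval : (DirectSum.component k ι (fun y => intervalFiber k (J y) (u p0)) x
            (X.1 p0)) =
          ((DirectSum.component k ι (fun y => intervalFiber k (J y) (u p0)) x
            (X.1 p0) : intervalFiber k (J x) (u p0)) : k) •
            (⟨1, fun hc => absurd (full_mem h p0) hc⟩ : intervalFiber k (J x) (u p0)) := by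
        apply Subtype.ext
        show _ = _ * (1 : k)
        rw [mul_one]
      erw [DirectSum.apply_eq_component k, hval, ← DirectSum.lof_eq_of k, map_smul, map_smul]
      simp only [SetLike.val_smul, smul_eq_mul, mul_one]
      rfl
    · rw [hF]
      simp only [dif_neg h, LinearMap.zero_apply]
      set Y : Sec k (DS k hu J hJ) := ⟨fun p =>
        DirectSum.lof k ι (fun y => intervalFiber k (J y) (u p)) x
          (DirectSum.component k ι (fun y => intervalFiber k (J y) (u p)) x (X.1 p)), by
        intro p q hpq
        rw [DS_map_eq]
        erw [dsMap_lof]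
        erw [← dsMap_component]
        have hX := X.2 p q hpq
        rw [DS_map_eq] at hX
        exact congrArg _ (congrArg _ hX)⟩ with hY
      obtain ⟨q', hq'⟩ := (Set.ne_univ_iff_exists_notMem _).mp h
      have hY0 : Y.1 q' = 0 := by
        rw [hY]
        have hz : DirectSum.component k ι (fun y => intervalFiber k (J y) (u q')) x
            (X.1 q') = 0 :=
          Subtype.ext ((DirectSum.component k ι
            (fun y => intervalFiber k (J y) (u q')) x (X.1 q')).2 hq')
        show DirectSum.lof k ι (fun y => intervalFiber k (J y) (u q')) x
            (DirectSum.component k ι (fun y => intervalFiber k (J y) (u q')) x (X.1 q')) = 0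
        rw [hz, map_zero]
      have hvi := pair_value_indep k (DS k hu J hJ) Y φ (hconn p0 q')
      rw [hY0, map_zero] at hvi
      show φ.1 p0 (Y.1 p0) = 0
      exact hvi
  rw [hrepr]
  apply Submodule.sum_mem
  intro x hx
  by_cases h : u ⁻¹' (J x) = Set.univ
  · rw [hF]
    simp only [dif_pos h]
    exact Submodule.smul_mem _ _ (Submodule.subset_span ⟨⟨x, h⟩, rfl⟩)
  · rw [hF]
    simp only [dif_neg h]
    exact Submodule.zero_mem _

lemma chi_DS (hu : Monotone u) (J : ι → Set Q) (hJ : ∀ x, IsConvexIn (J x)) (p0 : P)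
    (hconn : ∀ p q : P, Relation.ReflTransGen (fun a b : P => a ≤ b ∨ b ≤ a) p q)
    (hfin : Finite {x : ι // u ⁻¹' (J x) = Set.univ}) :
    chi k p0 (DS k hu J hJ) = Nat.card {x : ι // u ⁻¹' (J x) = Set.univ} := by
  cases nonempty_fintype {x : ι // u ⁻¹' (J x) = Set.univ}
  have hspan : LinearMap.range (pairMap k p0 (DS k hu J hJ)) =
      Submodule.span k (Set.range fun s : {x : ι // u ⁻¹' (J x) = Set.univ} =>
        pairMap k p0 (DS k hu J hJ) (fullSec k hu J hJ s)) := by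
    apply le_antisymm
    · rintro v ⟨X, rfl⟩
      exact pair_mem_span k hu J hJ p0 hconn X
    · rw [Submodule.span_le]
      rintro v ⟨s, rfl⟩
      exact ⟨fullSec k hu J hJ s, rfl⟩
  unfold chi
  rw [hspan, finrank_span_eq_card (li_fullSec k hu J hJ p0), Nat.card_eq_fintype_card]

lemma finite_full (hu : Monotone u) (J : ι → Set Q) (p0 : P)
    (hfd : FiniteDimensional k (⨁ y, intervalFiber k (J y) (u p0))) :
    Finite {x : ι // u ⁻¹' (J x) = Set.univ} := by
  classical
  have hli : LinearIndependent k
      (fun s : {x : ι // u ⁻¹' (J x) = Set.univ} =>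
        DirectSum.lof k ι (fun y => intervalFiber k (J y) (u p0)) s.1
          ⟨1, fun hc => absurd (full_mem s.2 p0) hc⟩) := by
    rw [linearIndependent_iff']
    intro t c hsum s hs
    have := congrArg
      (DirectSum.component k ι (fun y => intervalFiber k (J y) (u p0)) s.1) hsum
    rw [map_sum, map_zero] at this
    rw [Finset.sum_eq_single s] at this
    · rw [map_smul, DirectSum.component.lof_self] at this
      have hc := congrArg (fun w : intervalFiber k (J s.1) (u p0) => (w : k)) this
      simp only [Submodule.coe_smul, smul_eq_mul, mul_one, ZeroMemClass.coe_zero] at hc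
      exact hc
    · intro b hb hbs
      rw [map_smul, DirectSum.component.of, dif_neg (fun hh => hbs (Subtype.ext hh)),
        smul_zero]
    · intro hsnot
      exact absurd hs hsnot
  exact hli.finite

end ChiDS
section SliceFacts

/-- Helper to build slice points. -/
def mkSlice (n m : ℕ) (a b : ℤ) (hab : a = b ∨ a = b + 1) (h1 : -(m:ℤ) + 1 < a)
    (h2 : b < (n:ℤ) + m) : Slice n m :=
  ⟨⟨(OrderDual.toDual a, b), hab⟩, h1, h2⟩

lemma mkSlice_a (n m : ℕ) (a b : ℤ) (hab h1 h2) :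
    (mkSlice n m a b hab h1 h2).1.a = a := rfl

lemma mkSlice_b (n m : ℕ) (a b : ℤ) (hab h1 h2) :
    (mkSlice n m a b hab h1 h2).1.b = b := rfl

lemma slice_ab (n m : ℕ) (p : Slice n m) : p.1.a = p.1.b ∨ p.1.a = p.1.b + 1 := p.1.2

lemma slice_bounds (n m : ℕ) (p : Slice n m) : -(m:ℤ) + 1 < p.1.a ∧ p.1.b < (n:ℤ) + m := p.2

/-- The base point of the slice. -/
def pmin (n m : ℕ) (hm : 1 < m) : Slice n m :=
  mkSlice n m (-(m:ℤ) + 2) (-(m:ℤ) + 1) (Or.inr (by ring)) (by omega) (by omega)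

lemma slice_conn (n m : ℕ) (hn : 1 < n) (hm : 1 < m) :
    ∀ p q : Slice n m,
      Relation.ReflTransGen (fun a b : Slice n m => a ≤ b ∨ b ≤ a) p q := by
  have hsymm : Symmetric (fun a b : Slice n m => a ≤ b ∨ b ≤ a) := fun a b h => h.symm
  have aux : ∀ p : Slice n m,
      Relation.ReflTransGen (fun a b : Slice n m => a ≤ b ∨ b ≤ a) p (pmin n m hm) := by
    have key : ∀ N : ℕ, ∀ p : Slice n m, (p.1.b + m).toNat ≤ N →
        Relation.ReflTransGen (fun a b : Slice n m => a ≤ b ∨ b ≤ a) p (pmin n m hm) := by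
      intro N
      induction N with
      | zero =>
        intro p hp
        exfalso
        have h1 := slice_ab n m p
        have h2 := (slice_bounds n m p).1
        omega
      | succ N ih =>
        intro p hp
        have hab := slice_ab n m p
        have hb1 := (slice_bounds n m p).1
        have hb2 := (slice_bounds n m p).2
        rcases hab with hd | hd
        · -- diagonal : step down to (b, b-1)
          have hq2 : p.1.b - 1 < (n:ℤ) + m := by omega
          have hq1 : -(m:ℤ) + 1 < p.1.b := by omega
          set q := mkSlice n m p.1.b (p.1.b - 1) (Or.inr (by ring)) hq1 hq2 with hqdef
          have hle : q ≤ p := by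
            rw [Slice.le_iff, mkSlice_a, mkSlice_b]
            exact ⟨le_of_eq hd, by omega⟩
          refine Relation.ReflTransGen.head (Or.inr hle) (ih q ?_)
          rw [mkSlice_b]
          omega
        · -- off-diagonal
          by_cases hbase : p.1.b = -(m:ℤ) + 1
          · -- p = pmin
            have hpeq : p = pmin n m hm := by
              apply Subtype.ext
              apply Subtype.ext
              have h1 : p.1.1.1 = OrderDual.toDual (-(m:ℤ) + 2) := by
                show p.1.a = -(m:ℤ) + 2
                omega
              have h2 : p.1.1.2 = -(m:ℤ) + 1 := hbase
              exact Prod.ext h1 h2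
            rw [hpeq]
          · -- step to the diagonal (b, b), then to (b, b-1)
            have hq1 : -(m:ℤ) + 1 < p.1.b := by omega
            set q := mkSlice n m p.1.b p.1.b (Or.inl rfl) hq1 hb2 with hqdef
            have hle : p ≤ q := by
              rw [Slice.le_iff, mkSlice_a, mkSlice_b]
              exact ⟨by omega, le_refl _⟩
            set r := mkSlice n m p.1.b (p.1.b - 1) (Or.inr (by ring)) hq1 (by omega)
              with hrdef
            have hle2 : r ≤ q := by
              rw [Slice.le_iff]
              rw [mkSlice_a, mkSlice_b, mkSlice_a, mkSlice_b]
              exact ⟨le_refl _, by omega⟩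
            refine Relation.ReflTransGen.head (Or.inl hle)
              (Relation.ReflTransGen.head (Or.inr hle2) (ih r ?_))
            rw [mkSlice_b]
            omega
    intro p
    exact key (p.1.b + m).toNat p le_rfl
  intro p q
  exact (aux p).trans (by
    have h := (aux q).swap
    induction h with
    | refl => exact Relation.ReflTransGen.refl
    | tail _ hbc ih => exact ih.tail (hsymm hbc))

lemma zeta_surj (n m : ℕ) (hn : 1 < n) (hm : 1 < m) (b : Bipath n m) :
    ∃ s : Slice n m, zeta n m hn hm s.1 = b := by
  have hb := b.2
  by_cases hb0 : b.1 = 0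
  · refine ⟨mkSlice n m 1 0 (Or.inr (by ring)) (by omega) (by omega), ?_⟩
    apply Subtype.ext
    show zetaFun n m 1 0 = b.1
    unfold zetaFun
    rw [Int.zero_emod]
    split_ifs <;> omega
  · by_cases hbt : b.1 = n + m - 1
    · refine ⟨mkSlice n m 0 0 (Or.inl rfl) (by omega) (by omega), ?_⟩
      apply Subtype.ext
      show zetaFun n m 0 0 = b.1
      unfold zetaFun
      rw [Int.zero_emod]
      split_ifs <;> omega
    · refine ⟨mkSlice n m b.1 b.1 (Or.inl rfl) (by omega) (by omega), ?_⟩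
      apply Subtype.ext
      show zetaFun n m b.1 b.1 = b.1
      have hmod : (b.1 : ℤ) % ((n:ℤ) + m - 1) = b.1 :=
        Int.emod_eq_of_lt (by omega) (by omega)
      unfold zetaFun
      rw [hmod]
      split_ifs <;> omega

end SliceFacts

section FDIso
open CategoryTheory

lemma fd_of_iso {k : Type} [Field k] {P : Type} [Preorder P]
    {N N' : P ⥤ ModuleCat.{0} k} (e : N ≅ N') (p : P)
    (h : FiniteDimensional k (N.obj p)) : FiniteDimensional k (N'.obj p) :=
  Module.Finite.of_surjective (e.hom.app p).hom
    (Function.RightInverse.surjective (g := (e.inv.app p).hom)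
      (fun v => congrArg (fun (f : N'.obj p ⟶ N'.obj p) => f v) (e.inv_hom_id_app p)))

end FDIso

section RestIso
open CategoryTheory

/-- Restricting the concrete direct sum along a monotone map gives the reindexed
concrete direct sum. -/
noncomputable def restIso (k : Type) [Field k] {P Q : Type} [Preorder P] [Preorder Q]
    {u : P → Q} (hu : Monotone u) {ι : Type} (J : ι → Set Q) (hJ : ∀ x, IsConvexIn (J x)) :
    (restrictAlong k hu).obj (DSid k J hJ) ≅ DS k hu J hJ :=
  NatIso.ofComponents (fun p => Iso.refl _) (by
    intro p q h
    rw [Iso.refl_hom, Iso.refl_hom]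
    exact (Category.comp_id _).trans (Category.id_comp _).symm)

end RestIso
/-- Finite-slice multiplicity formula for the full interval: the multiplicity
of the full interval `B` in the arc code of `M` equals the multiplicity of the
full interval `ZZ|` in the barcode of `R|(M)`. -/
theorem multiplicity_full_interval (n m : ℕ) (hn : 1 < n) (hm : 1 < m)
    (k : Type) [Field k] (hz : Monotone (zeta n m hn hm))
    (M : Bipath n m ⥤ ModuleCat k)
    (hfd : ∀ p, FiniteDimensional k (M.obj p))
    (ι : Type) (f : ι → Set (Bipath n m)) (hf : ∀ x, IsIntervalIn (f x))
    (hMdec : Nonempty (M ≅ ∐ fun x : ι => intervalModule k (f x) (hf x).convex))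
    (κ : Type) (g : κ → Set (Slice n m)) (hg : ∀ y, IsIntervalIn (g y))
    (hRdec : Nonempty ((restrictAlong k (hz.comp (slice_val_mono n m))).obj M ≅
      ∐ fun y : κ => intervalModule k (g y) (hg y).convex)) :
    Nat.card {x : ι // f x = Set.univ} = Nat.card {y : κ // g y = Set.univ} := by
  classical
  obtain ⟨e1⟩ := hMdec
  obtain ⟨e2⟩ := hRdec
  have hum : Monotone (zeta n m hn hm ∘ fun p : Slice n m => p.1) :=
    hz.comp (slice_val_mono n m)
  have heq : hz.comp (slice_val_mono n m) = hum := rfl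
  rw [heq] at e2
  let eA : (restrictAlong k hum).obj M ≅
      DS k hum f (fun x => (hf x).convex) :=
    (restrictAlong k hum).mapIso e1 ≪≫
      (restrictAlong k hum).mapIso (sigmaIsoDS k f (fun x => (hf x).convex)) ≪≫
      restIso k hum f (fun x => (hf x).convex)
  let eB : (restrictAlong k hum).obj M ≅
      DS k (monotone_id (α := Slice n m)) g (fun y => (hg y).convex) :=
    e2 ≪≫ sigmaIsoDS k g (fun y => (hg y).convex) ≪≫ idIsoDS k g (fun y => (hg y).convex)
  have hconn := slice_conn n m hn hm
  have hfdR : FiniteDimensional k (((restrictAlong k hum).obj M).obj (pmin n m hm)) :=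
    hfd _
  have hfdA := fd_of_iso eA (pmin n m hm) hfdR
  have hfdB := fd_of_iso eB (pmin n m hm) hfdR
  have hfinA := finite_full k hum f (pmin n m hm) hfdA
  have hfinB := finite_full k (monotone_id (α := Slice n m)) g (pmin n m hm) hfdB
  have c1 : chi k (pmin n m hm) ((restrictAlong k hum).obj M) =
      Nat.card {x : ι //
        (zeta n m hn hm ∘ fun p : Slice n m => p.1) ⁻¹' (f x) = Set.univ} :=
    (chi_iso k (pmin n m hm) eA).trans
      (chi_DS k hum f (fun x => (hf x).convex) (pmin n m hm) hconn hfinA)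
  have c2 : chi k (pmin n m hm) ((restrictAlong k hum).obj M) =
      Nat.card {y : κ // (id : Slice n m → Slice n m) ⁻¹' (g y) = Set.univ} :=
    (chi_iso k (pmin n m hm) eB).trans
      (chi_DS k (monotone_id (α := Slice n m)) g (fun y => (hg y).convex)
        (pmin n m hm) hconn hfinB)
  have hcardf : Nat.card {x : ι //
      (zeta n m hn hm ∘ fun p : Slice n m => p.1) ⁻¹' (f x) = Set.univ} =
      Nat.card {x : ι // f x = Set.univ} := by
    apply Nat.card_congr
    apply Equiv.subtypeEquivRight
    intro x
    constructor
    · intro h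
      apply Set.eq_univ_of_forall
      intro b
      obtain ⟨s, hs⟩ := zeta_surj n m hn hm b
      have h2 : zeta n m hn hm s.1 ∈ f x := full_mem h s
      exact hs ▸ h2
    · intro h
      rw [h]
      exact Set.preimage_univ
  have hcardg : Nat.card {y : κ // (id : Slice n m → Slice n m) ⁻¹' (g y) = Set.univ} =
      Nat.card {y : κ // g y = Set.univ} := by
    apply Nat.card_congr
    apply Equiv.subtypeEquivRight
    intro y
    rw [Set.preimage_id]
  rw [← hcardf, ← hcardg]
  exact c1.symm.trans c2
end

section
/- Restriction to the finite slice of a left-interval module with j ≠ 0: for a left interval [i,j]◁ with j ∈ {n+m−1,...,n+1}, the finite-slice restriction satisfies R|(k[i,j]◁) ≅ k(−n−m+j, i+1)_ZZ ⊕ k(j−1, n+m)_ZZ, as modules over the finite slice ZZ| = (−m+1, n+m)_ZZ. -/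
open CategoryTheory CategoryTheory.Limits

open CategoryTheory CategoryTheory.Limits
open scoped Classical

section Decomp

variable (k : Type) [Field k] {P Q : Type} [Preorder P] [Preorder Q]
variable {f : P → Q} (hf : Monotone f) (I : Set Q) (hI : IsConvexIn I)

/-- Projection from a restricted interval module onto an interval module on a piece. -/
noncomputable def projT (J : Set P) (hJ : IsConvexIn J)
    (hsub : ∀ p, p ∈ J → f p ∈ I)
    (hnat : ∀ p q : P, p ≤ q → q ∈ J → p ∉ J → f p ∉ I) :
    (restrictAlong k hf).obj (intervalModule k I hI) ⟶ intervalModule k J hJ where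
  app p := ModuleCat.ofHom (X := ↥(intervalFiber k I (f p))) (Y := ↥(intervalFiber k J p))
    { toFun := fun x => ⟨if p ∈ J then x.1 else 0, fun h => if_neg h⟩
      map_add' := fun x y => Subtype.ext (by
        show (if p ∈ J then (x.1 + y.1 : k) else 0)
           = (if p ∈ J then x.1 else 0) + (if p ∈ J then y.1 else 0)
        by_cases h : p ∈ J <;> simp [h])
      map_smul' := fun c x => Subtype.ext (by
        show (if p ∈ J then (c • x.1 : k) else 0) = c • (if p ∈ J then x.1 else 0)
        by_cases h : p ∈ J <;> simp [h]) }
  naturality p q φ := by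
    ext x
    change ↥(intervalFiber k I (f p)) at x
    refine Subtype.ext ?_
    show (if q ∈ J then (if f q ∈ I then x.1 else 0) else 0)
       = (if q ∈ J then (if p ∈ J then x.1 else 0) else 0)
    by_cases hq : q ∈ J
    · rw [if_pos hq, if_pos hq, if_pos (hsub q hq)]
      by_cases hp : p ∈ J
      · rw [if_pos hp]
      · rw [if_neg hp, x.2 (hnat p q φ.le hq hp)]
    · simp [hq]

/-- Inclusion of an interval module on a piece into the restricted interval module. -/
noncomputable def injT (J : Set P) (hJ : IsConvexIn J)
    (hsub : ∀ p, p ∈ J → f p ∈ I)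
    (hnat : ∀ p q : P, p ≤ q → p ∈ J → q ∉ J → f q ∈ I → False) :
    intervalModule k J hJ ⟶ (restrictAlong k hf).obj (intervalModule k I hI) where
  app p := ModuleCat.ofHom (X := ↥(intervalFiber k J p)) (Y := ↥(intervalFiber k I (f p)))
    { toFun := fun x => ⟨x.1, fun h => x.2 (fun hp => h (hsub p hp))⟩
      map_add' := fun x y => Subtype.ext rfl
      map_smul' := fun c x => Subtype.ext rfl }
  naturality p q φ := by
    ext x
    show ((_ : ↥(intervalFiber k I (f q))) = _)
    refine Subtype.ext ?_
    show (if q ∈ J then x.1 else 0) = (if f q ∈ I then x.1 else 0)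
    by_cases hq : q ∈ J
    · rw [if_pos hq, if_pos (hsub q hq)]
    · rw [if_neg hq]
      by_cases hfq : f q ∈ I
      · rw [if_pos hfq]
        by_cases hp : p ∈ J
        · exact absurd (hnat p q φ.le hp hq hfq) id
        · exact (x.2 hp).symm
      · rw [if_neg hfq]

/-- Decomposition of a restricted interval module into two pieces. -/
noncomputable def decompIso (J1 J2 : Set P) (hJ1 : IsConvexIn J1) (hJ2 : IsConvexIn J2)
    (hcov : ∀ p, f p ∈ I ↔ p ∈ J1 ∨ p ∈ J2)
    (hdisj : ∀ p, p ∈ J1 → p ∈ J2 → False)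
    (hsep : ∀ p q : P, p ≤ q →
      (p ∈ J1 → q ∈ J2 → False) ∧ (p ∈ J2 → q ∈ J1 → False)) :
    (restrictAlong k hf).obj (intervalModule k I hI) ≅
      intervalModule k J1 hJ1 ⊞ intervalModule k J2 hJ2 := by
  have hsub1 : ∀ p, p ∈ J1 → f p ∈ I := fun p hp => (hcov p).2 (Or.inl hp)
  have hsub2 : ∀ p, p ∈ J2 → f p ∈ I := fun p hp => (hcov p).2 (Or.inr hp)
  have h1 : ∀ p q : P, p ≤ q → q ∈ J1 → p ∉ J1 → f p ∉ I := by
    intro p q hpq hq hp hfp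
    rcases (hcov p).1 hfp with h | h
    · exact hp h
    · exact (hsep p q hpq).2 h hq
  have h2 : ∀ p q : P, p ≤ q → q ∈ J2 → p ∉ J2 → f p ∉ I := by
    intro p q hpq hq hp hfp
    rcases (hcov p).1 hfp with h | h
    · exact (hsep p q hpq).1 h hq
    · exact hp h
  have h3 : ∀ p q : P, p ≤ q → p ∈ J1 → q ∉ J1 → f q ∈ I → False := by
    intro p q hpq hp hq hfq
    rcases (hcov q).1 hfq with h | h
    · exact hq h
    · exact (hsep p q hpq).1 hp h
  have h4 : ∀ p q : P, p ≤ q → p ∈ J2 → q ∉ J2 → f q ∈ I → False := by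
    intro p q hpq hp hq hfq
    rcases (hcov q).1 hfq with h | h
    · exact (hsep p q hpq).2 hp h
    · exact hq h
  have e11 : injT k hf I hI J1 hJ1 hsub1 h3 ≫ projT k hf I hI J1 hJ1 hsub1 h1 = 𝟙 _ := by
    ext p x
    refine Subtype.ext ?_
    show (if p ∈ J1 then x.1 else 0) = x.1
    by_cases hp : p ∈ J1
    · rw [if_pos hp]
    · rw [if_neg hp, x.2 hp]
  have e12 : injT k hf I hI J1 hJ1 hsub1 h3 ≫ projT k hf I hI J2 hJ2 hsub2 h2 = 0 := by
    ext p x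
    refine Subtype.ext ?_
    show (if p ∈ J2 then x.1 else 0) = 0
    by_cases hp : p ∈ J2
    · rw [if_pos hp, x.2 (fun ha => hdisj p ha hp)]
    · rw [if_neg hp]
  have e21 : injT k hf I hI J2 hJ2 hsub2 h4 ≫ projT k hf I hI J1 hJ1 hsub1 h1 = 0 := by
    ext p x
    refine Subtype.ext ?_
    show (if p ∈ J1 then x.1 else 0) = 0
    by_cases hp : p ∈ J1
    · rw [if_pos hp, x.2 (fun ha => hdisj p hp ha)]
    · rw [if_neg hp]
  have e22 : injT k hf I hI J2 hJ2 hsub2 h4 ≫ projT k hf I hI J2 hJ2 hsub2 h2 = 𝟙 _ := by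
    ext p x
    refine Subtype.ext ?_
    show (if p ∈ J2 then x.1 else 0) = x.1
    by_cases hp : p ∈ J2
    · rw [if_pos hp]
    · rw [if_neg hp, x.2 hp]
  refine
    { hom := biprod.lift (projT k hf I hI J1 hJ1 hsub1 h1) (projT k hf I hI J2 hJ2 hsub2 h2)
      inv := biprod.desc (injT k hf I hI J1 hJ1 hsub1 h3) (injT k hf I hI J2 hJ2 hsub2 h4)
      hom_inv_id := ?_
      inv_hom_id := ?_ }
  · rw [biprod.lift_desc]
    ext p x
    change ↥(intervalFiber k I (f p)) at x
    show ((_ : ↥(intervalFiber k I (f p))) = _)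
    refine Subtype.ext ?_
    show (if p ∈ J1 then x.1 else 0) + (if p ∈ J2 then x.1 else 0) = x.1
    by_cases hfp : f p ∈ I
    · rcases (hcov p).1 hfp with h | h
      · rw [if_pos h, if_neg (fun hb => hdisj p h hb), add_zero]
      · rw [if_pos h, if_neg (fun ha => hdisj p ha h), zero_add]
    · have hp1 : p ∉ J1 := fun h => hfp (hsub1 p h)
      have hp2 : p ∉ J2 := fun h => hfp (hsub2 p h)
      rw [if_neg hp1, if_neg hp2, x.2 hfp, add_zero]
  · apply biprod.hom_ext <;> apply biprod.hom_ext' <;>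
      simp [e11, e12, e21, e22]

end Decomp

lemma bip_left (n z i : ℕ) (hn : 0 < n) (hi : i < n) : bipathLE n z i ↔ (z ≤ i ∨ z = 0) := by
  unfold bipathLE; omega

lemma bip_right (n z j : ℕ) (hn : 0 < n) (hj : n < j) : bipathLE n z j ↔ (j ≤ z ∨ z = 0) := by
  unfold bipathLE; omega

lemma key_iff (n m : ℕ) (i j : ℕ)
    (hn : 1 < n) (hm : 1 < m)
    (hi : i ≤ n - 1) (hj : n + 1 ≤ j) (hjn : j < n + m)
    (a b : ℤ) (hab : a = b ∨ a = b + 1) (ha : -(m:ℤ) + 1 < a) (hb : b < (n:ℤ) + m) :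
    (bipathLE n (zetaFun n m a b) i ∨ bipathLE n (zetaFun n m a b) j) ↔
      ((-(n:ℤ) - (m:ℤ) + (j:ℤ) < a ∧ b < (i:ℤ) + 1) ∨
        ((j:ℤ) - 1 < a ∧ b < (n:ℤ) + (m:ℤ))) := by
  have hmod : (b < 0 ∧ b % ((n:ℤ)+(m:ℤ)-1) = b + ((n:ℤ)+(m:ℤ)-1)) ∨
      (b = (n:ℤ)+(m:ℤ)-1 ∧ b % ((n:ℤ)+(m:ℤ)-1) = 0) ∨
      (0 ≤ b ∧ b < (n:ℤ)+(m:ℤ)-1 ∧ b % ((n:ℤ)+(m:ℤ)-1) = b) := by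
    rcases lt_or_ge b 0 with h1 | h1
    · refine Or.inl ⟨h1, ?_⟩
      rw [show b % ((n:ℤ) + (m:ℤ) - 1) = (b + ((n:ℤ) + (m:ℤ) - 1) * 1) % ((n:ℤ) + (m:ℤ) - 1) by
          rw [Int.add_mul_emod_self_left]]
      rw [mul_one, Int.emod_eq_of_lt (by omega) (by omega)]
    · rcases eq_or_lt_of_le (show b ≤ (n:ℤ) + (m:ℤ) - 1 by omega) with h2 | h2
      · exact Or.inr (Or.inl ⟨h2, by rw [h2, Int.emod_self]⟩)
      · exact Or.inr (Or.inr ⟨h1, h2, Int.emod_eq_of_lt h1 h2⟩)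
  have hn0 : 0 < n := by omega
  have hi' : i < n := by omega
  have hj' : n < j := by omega
  rw [bip_left n _ i hn0 hi', bip_right n _ j hn0 hj']
  unfold zetaFun
  rcases hab with h0 | h0 <;>
    rcases hmod with ⟨h1, he⟩ | ⟨h1, he⟩ | ⟨h1, h2, he⟩ <;>
    rw [he] <;> clear he <;> split_ifs <;> (try simp only [false_or, or_false]) <;> omega

/-- Restriction to the finite slice of a left-interval module with `j ≠ 0`:
`R|(k[i,j]◁) ≅ k(-n-m+j, i+1)_ZZ ⊕ k(j-1, n+m)_ZZ`. -/
theorem slice_restrict_left_interval (n m : ℕ) (hn : 1 < n) (hm : 1 < m)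
    (k : Type) [Field k] (hz : Monotone (zeta n m hn hm))
    (i j : Bipath n m) (hi : i.1 ≤ n - 1) (hj : n + 1 ≤ j.1) :
    Nonempty ((restrictAlong k (hz.comp (slice_val_mono n m))).obj
        (intervalModule k {z | z ≤ i ∨ z ≤ j} (isConvex_lower2 i j)) ≅
      intervalModule k (sliceIoo n m (-(n:ℤ) - m + j.1) ((i.1 : ℤ) + 1))
          (sliceIoo_convex n m _ _) ⊞
        intervalModule k (sliceIoo n m ((j.1 : ℤ) - 1) ((n:ℤ) + m))
          (sliceIoo_convex n m _ _)) := by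
  have hjn : j.1 < n + m := j.2
  refine ⟨decompIso k (hz.comp (slice_val_mono n m)) _ _ _ _ _ _ ?_ ?_ ?_⟩
  · -- covering
    intro p
    have hab : p.1.a = p.1.b ∨ p.1.a = p.1.b + 1 := p.1.2
    have ha : -(m:ℤ) + 1 < p.1.a := p.2.1
    have hb : p.1.b < (n:ℤ) + m := p.2.2
    have := key_iff n m i.1 j.1 hn hm hi hj hjn p.1.a p.1.b hab ha hb
    exact this
  · -- disjointness
    intro p hp1 hp2
    have hab : p.1.a = p.1.b ∨ p.1.a = p.1.b + 1 := p.1.2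
    have e1 : -(n:ℤ) - (m:ℤ) + (j.1:ℤ) < p.1.a ∧ p.1.b < (i.1:ℤ) + 1 := hp1
    have e2 : (j.1:ℤ) - 1 < p.1.a ∧ p.1.b < (n:ℤ) + (m:ℤ) := hp2
    omega
  · -- separation
    intro p q hpq
    have hab : p.1.a = p.1.b ∨ p.1.a = p.1.b + 1 := p.1.2
    have hab' : q.1.a = q.1.b ∨ q.1.a = q.1.b + 1 := q.1.2
    have hle : q.1.a ≤ p.1.a ∧ p.1.b ≤ q.1.b := Slice.le_iff.1 hpq
    constructor
    · intro hp1 hq2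
      have e1 : -(n:ℤ) - (m:ℤ) + (j.1:ℤ) < p.1.a ∧ p.1.b < (i.1:ℤ) + 1 := hp1
      have e2 : (j.1:ℤ) - 1 < q.1.a ∧ q.1.b < (n:ℤ) + (m:ℤ) := hq2
      omega
    · intro hp2 hq1
      have e2 : (j.1:ℤ) - 1 < p.1.a ∧ p.1.b < (n:ℤ) + (m:ℤ) := hp2
      have e1 : -(n:ℤ) - (m:ℤ) + (j.1:ℤ) < q.1.a ∧ q.1.b < (i.1:ℤ) + 1 := hq1
      omega
end
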